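/- arXiv:1301.7040 — 6 statements merged into one kernel-verified Lean document; each statement's English description precedes it below -/
import Mathlib

section
/- Supersolution property of the log-distance: the function ρ̃(x) = log(G(0,0)/G(0,x)) satisfies, for x ≠ 0, ρ̃(x) ≥ ∑_{y∼x} ρ̃(y) · g(y)/(2d(1+V(x))g(x)) + log(1+V(x)). -/
/-- Supersolution property of the log-distance
`ρ̃(x) = log (G(0,0)/G(0,x))`: for `x ≠ 0`,
`ρ̃(x) ≥ ∑_{y∼x} ρ̃(y) · g(y)/(2d (1+V(x)) g(x)) + log (1+V(x))`. -/
theorem stmt8 (d : ℕ) (hd : 0 < d) (ι : Type*) [Fintype ι] [DecidableEq ι]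
    (A : Matrix ι ι ℝ) (hA01 : ∀ i j, A i j = 0 ∨ A i j = 1) (hAsym : A.IsSymm)
    (hAdiag : ∀ i, A i i = 0) (hArow : ∀ i, ∑ j, A i j ≤ 2 * d)
    (V : ι → ℝ) (hV : ∀ i, 0 ≤ V i)
    (H G : Matrix ι ι ℝ)
    (hH : H = 1 + Matrix.diagonal V - ((2 * d : ℝ))⁻¹ • A)
    (hHinv : IsUnit H.det) (hG : G = H⁻¹)
    (hGpos : ∀ i j, 0 < G i j)
    (x₀ : ι) (g ρt : ι → ℝ)
    (hg : ∀ x, g x = G x₀ x)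
    (hρt : ∀ x, ρt x = Real.log (g x₀ / g x))
    (x : ι) (hx : x ≠ x₀) :
    ρt x ≥ (∑ y, A x y * ρt y * (g y / (2 * d * (1 + V x) * g x)))
      + Real.log (1 + V x) := by
  have hgpos : ∀ y, 0 < g y := fun y => by rw [hg]; exact hGpos _ _
  have hA0 : ∀ i j, 0 ≤ A i j := fun i j => by rcases hA01 i j with h | h <;> rw [h] <;> norm_num
  have hd2 : (0:ℝ) < 2 * d := by positivity
  have hVx : (0:ℝ) < 1 + V x := by linarith [hV x]
  have hD : (0:ℝ) < 2 * d * (1 + V x) * g x := mul_pos (mul_pos hd2 hVx) (hgpos x)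
  set D : ℝ := 2 * d * (1 + V x) * g x with hDdef
  -- key equation from (G * H) x₀ x = 0
  have hGH : G * H = 1 := by rw [hG]; exact Matrix.nonsing_inv_mul H hHinv
  have h0 : ∑ y, g y * H y x = 0 := by
    have := congrFun (congrFun hGH x₀) x
    rw [Matrix.mul_apply, Matrix.one_apply_ne' (Ne.symm (by exact fun h => hx h.symm))] at this
    simpa [hg] using this
  have hkey : (1 + V x) * g x = (2 * (d:ℝ))⁻¹ * ∑ y, A x y * g y := by
    have hHyx : ∀ y, H y x = (if y = x then (1 + V x) else 0) - (2 * (d:ℝ))⁻¹ * A y x := by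
      intro y
      rw [hH]
      simp [Matrix.sub_apply, Matrix.add_apply, Matrix.one_apply, Matrix.diagonal_apply,
        Matrix.smul_apply, smul_eq_mul]
      by_cases h : y = x <;> simp [h]
    simp only [hHyx, mul_sub] at h0
    rw [Finset.sum_sub_distrib] at h0
    simp only [mul_ite, mul_zero, Finset.sum_ite_eq', Finset.mem_univ, if_true] at h0
    have heq : ∑ y, g y * ((2 * (d:ℝ))⁻¹ * A y x) = (2 * (d:ℝ))⁻¹ * ∑ y, A x y * g y := by
      rw [Finset.mul_sum]
      exact Finset.sum_congr rfl fun y _ => by rw [Matrix.IsSymm.apply hAsym x y]; ring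
    rw [heq] at h0
    linarith
  set w : ι → ℝ := fun y => A x y * g y / D with hwdef
  have hw0 : ∀ y, 0 ≤ w y := fun y => by
    apply div_nonneg (mul_nonneg (hA0 x y) (hgpos y).le) hD.le
  have hsumAg : ∑ y, A x y * g y = D := by
    have h2 : (2 * (d:ℝ)) * ((1 + V x) * g x) = ∑ y, A x y * g y := by
      rw [hkey, ← mul_assoc, mul_inv_cancel₀ hd2.ne', one_mul]
    rw [hDdef, ← h2]; ring
  have hwsum : ∑ y, w y = 1 := by
    rw [hwdef]
    simp only [← Finset.sum_div, hsumAg, div_self hD.ne']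
  -- Jensen for log (concave) applied to points (g y)⁻¹
  have hjensen : ∑ y, w y * Real.log (g y)⁻¹ ≤ Real.log (∑ y, w y * (g y)⁻¹) := by
    have := (strictConcaveOn_log_Ioi.concaveOn).le_map_sum
      (t := Finset.univ) (w := w) (p := fun y => (g y)⁻¹)
      (fun i _ => hw0 i) hwsum (fun i _ => by exact inv_pos.mpr (hgpos i))
    simpa [smul_eq_mul] using this
  have hS : ∑ y, w y * (g y)⁻¹ = (∑ y, A x y) / D := by
    have hterm : ∀ y, w y * (g y)⁻¹ = A x y / D := fun y => by
      rw [hwdef]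
      field_simp [hD.ne', (hgpos y).ne']
    rw [Finset.sum_congr rfl fun y _ => hterm y, ← Finset.sum_div]
  have hSpos : 0 < ∑ y, w y * (g y)⁻¹ := by
    have : 0 < ∑ y, w y := by rw [hwsum]; norm_num
    obtain ⟨y, -, hy⟩ := Finset.exists_lt_of_sum_lt (f := fun _ : ι => (0:ℝ)) (g := w)
      (by simpa using this)
    exact Finset.sum_pos' (fun i _ => mul_nonneg (hw0 i) (inv_pos.mpr (hgpos i)).le)
      ⟨y, Finset.mem_univ y, mul_pos hy (inv_pos.mpr (hgpos y))⟩
  have hSle : ∑ y, w y * (g y)⁻¹ ≤ ((1 + V x) * g x)⁻¹ := by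
    rw [hS]
    rw [div_le_iff₀ hD]
    have : ((1 + V x) * g x)⁻¹ * D = 2 * d := by
      rw [hDdef, show (2*(d:ℝ)) * (1 + V x) * g x = ((1 + V x) * g x) * (2 * d) by ring,
        ← mul_assoc, inv_mul_cancel₀ (mul_pos hVx (hgpos x)).ne', one_mul]
    rw [this]
    exact hArow x
  have hlogS : Real.log (∑ y, w y * (g y)⁻¹) ≤ -(Real.log (1 + V x) + Real.log (g x)) := by
    calc Real.log (∑ y, w y * (g y)⁻¹) ≤ Real.log (((1 + V x) * g x)⁻¹) :=
          Real.log_le_log hSpos hSle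
      _ = -(Real.log (1 + V x) + Real.log (g x)) := by
          rw [Real.log_inv, Real.log_mul hVx.ne' (hgpos x).ne']
  -- assemble
  have hterm : ∀ y, A x y * ρt y * (g y / D) = w y * ρt y := fun y => by
    rw [hwdef]; ring
  have hρ : ∀ y, ρt y = Real.log (g x₀) - Real.log (g y) := fun y => by
    rw [hρt, Real.log_div (hgpos x₀).ne' (hgpos y).ne']
  have hsum : ∑ y, A x y * ρt y * (g y / D) =
      Real.log (g x₀) + ∑ y, w y * Real.log (g y)⁻¹ := by
    rw [Finset.sum_congr rfl fun y _ => hterm y]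
    have : ∀ y, w y * ρt y = w y * Real.log (g x₀) + w y * Real.log (g y)⁻¹ := fun y => by
      rw [hρ y, Real.log_inv]; ring
    rw [Finset.sum_congr rfl fun y _ => this y, Finset.sum_add_distrib, ← Finset.sum_mul, hwsum]
    ring
  rw [ge_iff_le, hsum, hρ x]
  have := hjensen.trans hlogS
  linarith
end

section
/- If V(x) ≥ ε > 0 for all x, then ∑_y G(0,y)G(y,x)/G(0,x) ≤ C_ε (ρ(x) + 1), where ρ(x) = log( sqrt(G(0,0)G(x,x)) / G(0,x) ) and C_ε depends only on ε. -/
set_option maxHeartbeats 1000000 in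
/-- If `V ≥ ε > 0`, then `∑_y G(0,y) G(y,x) / G(0,x) ≤ C_ε (ρ(x)+1)`,
where `ρ(x) = log (√(G(0,0) G(x,x)) / G(0,x))` and `C_ε` depends only on `ε`
(and on the dimension `d`); the bound is uniform over all finite boxes. -/
theorem stmt9 (d : ℕ) (hd : 0 < d) (ε : ℝ) (hε : 0 < ε) :
    ∃ C : ℝ, 0 < C ∧
      ∀ (ι : Type) [Fintype ι] [DecidableEq ι],
      ∀ (A : Matrix ι ι ℝ),
        (∀ i j, A i j = 0 ∨ A i j = 1) → A.IsSymm → (∀ i, A i i = 0) →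
        (∀ i, ∑ j, A i j ≤ 2 * d) →
      ∀ (V : ι → ℝ), (∀ i, ε ≤ V i) →
      ∀ (H G : Matrix ι ι ℝ),
        H = 1 + Matrix.diagonal V - ((2 * d : ℝ))⁻¹ • A →
        IsUnit H.det → G = H⁻¹ → (∀ i j, 0 < G i j) →
      ∀ x₀ x : ι,
        ∑ y, G x₀ y * G y x / G x₀ x
          ≤ C * (Real.log (Real.sqrt (G x₀ x₀ * G x x) / G x₀ x) + 1) := by
  refine ⟨2/ε, by positivity, ?_⟩
  intro ι _ _ A hA01 hAsymm hAdiag hArow V hV H G hH hdet hG hGpos x₀ x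
  haveI : Nonempty ι := ⟨x⟩
  have hεi : (0:ℝ) < ε⁻¹ := inv_pos.mpr hε
  have hεε : ε⁻¹ * ε = 1 := inv_mul_cancel₀ hε.ne'
  have hd' : (0:ℝ) < (d:ℝ) := by exact_mod_cast hd
  have h2d : (0:ℝ) < 2 * (d:ℝ) := by linarith
  set c : ℝ := ((2 * (d:ℝ)))⁻¹ with hcdef
  have hc : 0 < c := inv_pos.mpr h2d
  have hc2d : c * (2 * (d:ℝ)) = 1 := inv_mul_cancel₀ h2d.ne'
  have hA0 : ∀ i j, 0 ≤ A i j := by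
    intro i j; rcases hA01 i j with h | h <;> rw [h] <;> norm_num
  -- basic matrix identities
  have hHG : H * G = 1 := by rw [hG]; exact Matrix.mul_nonsing_inv H hdet
  have hGH : G * H = 1 := by rw [hG]; exact Matrix.nonsing_inv_mul H hdet
  have hHsymm : H.transpose = H := by
    rw [hH]
    simp [Matrix.transpose_sub, Matrix.transpose_add, Matrix.transpose_smul,
      Matrix.diagonal_transpose, hAsymm.eq]
  have hGsymm : ∀ i j, G i j = G j i := by
    intro i j
    have : G.transpose = G := by
      rw [hG, Matrix.transpose_nonsing_inv, hHsymm]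
    calc G i j = G.transpose j i := rfl
    _ = G j i := by rw [this]
  -- entrywise formula for H.mulVec
  have entryv : ∀ (v : ι → ℝ) (y : ι),
      H.mulVec v y = (1 + V y) * v y - c * ∑ z, A y z * v z := by
    intro v y
    rw [hH]
    simp only [Matrix.mulVec, dotProduct, Matrix.sub_apply, Matrix.add_apply,
      Matrix.one_apply, Matrix.diagonal_apply, Matrix.smul_apply, smul_eq_mul]
    have : ∀ z, (((if y = z then (1:ℝ) else 0) + if y = z then V y else 0) - c * A y z) * v z
        = (if y = z then (1 + V y) * v z else 0) - c * (A y z * v z) := by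
      intro z; split_ifs <;> ring
    rw [Finset.sum_congr rfl fun z _ => this z, Finset.sum_sub_distrib,
      Finset.sum_ite_eq Finset.univ y (fun z => (1 + V y) * v z)]
    simp [Finset.mul_sum]
  -- column identities
  have hid : ∀ p y, (1 + V y) * G y p - c * ∑ z, A y z * G z p
      = if y = p then (1:ℝ) else 0 := by
    intro p y
    have h1 : H.mulVec (fun z => G z p) y = (H * G) y p := by
      simp [Matrix.mulVec, dotProduct, Matrix.mul_apply]
    rw [← entryv (fun z => G z p) y, h1, hHG, Matrix.one_apply]
  have hid2 : ∀ y, (1 + V y) * (G * G) y x - c * ∑ z, A y z * (G * G) z x = G y x := by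
    intro y
    have h1 : H.mulVec (fun z => (G * G) z x) y = (H * (G * G)) y x := by
      simp [Matrix.mulVec, dotProduct, Matrix.mul_apply]
    have h2 : H * (G * G) = G := by rw [← Matrix.mul_assoc, hHG, Matrix.one_mul]
    rw [← entryv (fun z => (G * G) z x) y, h1, h2]
  -- maximum lemma: G y p ≤ G p p
  have hmax : ∀ p y, G y p ≤ G p p := by
    intro p y
    obtain ⟨y₀, -, hy₀⟩ := Finset.exists_max_image Finset.univ (fun z => G z p)
      ⟨p, Finset.mem_univ p⟩
    have h1 : G y p ≤ G y₀ p := hy₀ y (Finset.mem_univ y)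
    rcases eq_or_ne y₀ p with rfl | hne
    · exact h1
    · exfalso
      have hid' := hid p y₀
      rw [if_neg hne] at hid'
      have hsum : ∑ z, A y₀ z * G z p ≤ ∑ z, A y₀ z * G y₀ p :=
        Finset.sum_le_sum fun z _ =>
          mul_le_mul_of_nonneg_left (hy₀ z (Finset.mem_univ z)) (hA0 y₀ z)
      have hsum2 : ∑ z, A y₀ z * G y₀ p = (∑ z, A y₀ z) * G y₀ p := by
        rw [Finset.sum_mul]
      have h3 : c * ∑ z, A y₀ z * G z p ≤ G y₀ p := by
        calc c * ∑ z, A y₀ z * G z p ≤ c * ((∑ z, A y₀ z) * G y₀ p) := by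
              rw [← hsum2]; exact mul_le_mul_of_nonneg_left hsum hc.le
        _ ≤ c * ((2 * (d:ℝ)) * G y₀ p) := by
              apply mul_le_mul_of_nonneg_left _ hc.le
              apply mul_le_mul_of_nonneg_right _ (hGpos y₀ p).le
              exact_mod_cast hArow y₀
        _ = G y₀ p := by rw [← mul_assoc, hc2d, one_mul]
      nlinarith [hGpos y₀ p, hV y₀, mul_le_mul_of_nonneg_right (hV y₀) (hGpos y₀ p).le]
  -- the comparison function
  set ρt : ι → ℝ := fun y => Real.log (G x x / G y x) with hρt
  have hρt0 : ∀ y, 0 ≤ ρt y := by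
    intro y
    apply Real.log_nonneg
    rw [le_div_iff₀ (hGpos y x)]
    simpa using hmax x y
  set w : ι → ℝ := fun z => (G * G) z x - ε⁻¹ * (ρt z + 1) * G z x with hw
  -- key pointwise inequality: H w ≤ 0
  have hHw : ∀ y, (1 + V y) * w y - c * ∑ z, A y z * w z ≤ 0 := by
    intro y
    set δ : ℝ := if y = x then (1:ℝ) else 0 with hδdef
    have hδ0 : 0 ≤ δ := by rw [hδdef]; split_ifs <;> norm_num
    have ha : 0 < G y x := hGpos y x
    -- split the sum
    have hsplit : ∑ z, A y z * w z
        = ∑ z, A y z * (G * G) z x - ε⁻¹ * ∑ z, A y z * (G z x * ρt z)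
          - ε⁻¹ * ∑ z, A y z * G z x := by
      rw [Finset.mul_sum, Finset.mul_sum, ← Finset.sum_sub_distrib, ← Finset.sum_sub_distrib]
      apply Finset.sum_congr rfl
      intro z _
      simp only [hw]; ring
    -- termwise log bound
    have hterm : ∀ z, A y z * (G z x * ρt z)
        ≤ A y z * (G z x * ρt y - (G z x - G y x)) := by
      intro z
      apply mul_le_mul_of_nonneg_left _ (hA0 y z)
      have hgz : 0 < G z x := hGpos z x
      have hlog : ρt y - ρt z = Real.log (G z x / G y x) := by
        simp only [hρt]
        rw [Real.log_div (hGpos x x).ne' ha.ne', Real.log_div (hGpos x x).ne' hgz.ne',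
          Real.log_div hgz.ne' ha.ne']
        ring
      have h1 : Real.log (G y x / G z x) ≤ G y x / G z x - 1 :=
        Real.log_le_sub_one_of_pos (by positivity)
      have h2 : Real.log (G z x / G y x) = - Real.log (G y x / G z x) := by
        rw [← Real.log_inv]; congr 1; field_simp
      have h3 : 1 - G y x / G z x ≤ Real.log (G z x / G y x) := by
        rw [h2]; linarith
      have h4 : G z x - G y x ≤ G z x * Real.log (G z x / G y x) := by
        have := mul_le_mul_of_nonneg_left h3 hgz.le
        calc G z x - G y x = G z x * (1 - G y x / G z x) := by field_simp
        _ ≤ G z x * Real.log (G z x / G y x) := this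
      nlinarith [h4, hlog]
    have hsum1 : ∑ z, A y z * (G z x * ρt z)
        ≤ (∑ z, A y z * G z x) * ρt y - ∑ z, A y z * G z x + (∑ z, A y z) * G y x := by
      calc ∑ z, A y z * (G z x * ρt z)
          ≤ ∑ z, A y z * (G z x * ρt y - (G z x - G y x)) :=
            Finset.sum_le_sum fun z _ => hterm z
      _ = (∑ z, A y z * G z x) * ρt y - ∑ z, A y z * G z x + (∑ z, A y z) * G y x := by
            rw [Finset.sum_mul, Finset.sum_mul, ← Finset.sum_sub_distrib,
              ← Finset.sum_add_distrib]
            apply Finset.sum_congr rfl; intro z _; ring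
    have hcS : c * ∑ z, A y z * G z x = (1 + V y) * G y x - δ := by
      have := hid x y; rw [← hδdef] at this; linarith
    have hnA : c * ((∑ z, A y z) * G y x) ≤ G y x := by
      calc c * ((∑ z, A y z) * G y x) ≤ c * ((2 * (d:ℝ)) * G y x) := by
            apply mul_le_mul_of_nonneg_left _ hc.le
            apply mul_le_mul_of_nonneg_right _ ha.le
            exact_mod_cast hArow y
      _ = G y x := by rw [← mul_assoc, hc2d, one_mul]
    -- combine: c * Sρ ≤ ((1+Vy) a - δ) ρy - ((1+Vy) a - δ) + a
    have hkey : c * ∑ z, A y z * (G z x * ρt z)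
        ≤ ((1 + V y) * G y x - δ) * ρt y - ((1 + V y) * G y x - δ) + G y x := by
      have h5 := mul_le_mul_of_nonneg_left hsum1 hc.le
      have h6 : c * ((∑ z, A y z * G z x) * ρt y - ∑ z, A y z * G z x
          + (∑ z, A y z) * G y x)
          = (c * ∑ z, A y z * G z x) * ρt y - c * ∑ z, A y z * G z x
            + c * ((∑ z, A y z) * G y x) := by ring
      rw [h6, hcS] at h5
      linarith
    -- final arithmetic
    rw [hsplit]
    have hg2 := hid2 y
    have hδρ : 0 ≤ δ * ρt y := mul_nonneg hδ0 (hρt0 y)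
    have hVa : G y x ≤ ε⁻¹ * (V y * G y x) := by
      have := mul_le_mul_of_nonneg_right (hV y) ha.le
      calc G y x = ε⁻¹ * (ε * G y x) := by rw [← mul_assoc, hεε, one_mul]
      _ ≤ ε⁻¹ * (V y * G y x) := mul_le_mul_of_nonneg_left this hεi.le
    have hkey' := mul_le_mul_of_nonneg_left hkey hεi.le
    have hδρ' : 0 ≤ ε⁻¹ * (δ * ρt y) := mul_nonneg hεi.le hδρ
    -- expand w y
    have hwy : w y = (G * G) y x - ε⁻¹ * (ρt y + 1) * G y x := rfl
    rw [hwy]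
    nlinarith [hkey', hδρ', hVa, hcS, hg2]
  -- maximum principle: w ≤ 0
  have hwle : ∀ y, w y ≤ 0 := by
    intro y
    have hGHw : G.mulVec (H.mulVec w) = w := by
      rw [Matrix.mulVec_mulVec, hGH, Matrix.one_mulVec]
    have : w y = ∑ z, G y z * (H.mulVec w) z := by
      conv_lhs => rw [← hGHw]
      simp [Matrix.mulVec, dotProduct]
    rw [this]
    apply Finset.sum_nonpos
    intro z _
    apply mul_nonpos_of_nonneg_of_nonpos (hGpos y z).le
    rw [entryv]
    exact hHw z
  -- conclude
  have hw0 : (G * G) x₀ x ≤ ε⁻¹ * (ρt x₀ + 1) * G x₀ x := by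
    have := hwle x₀
    simp only [hw] at this
    linarith
  set ρ : ℝ := Real.log (Real.sqrt (G x₀ x₀ * G x x) / G x₀ x) with hρ
  have hg1 : G x₀ x ≤ G x x := hmax x x₀
  have hg2 : G x₀ x ≤ G x₀ x₀ := by rw [hGsymm x₀ x]; exact hmax x₀ x
  have hsq : G x₀ x ^ 2 ≤ G x₀ x₀ * G x x := by nlinarith [hGpos x₀ x]
  have hsqrt : G x₀ x ≤ Real.sqrt (G x₀ x₀ * G x x) := by
    rw [show G x₀ x = Real.sqrt (G x₀ x ^ 2) from
      (Real.sqrt_sq (hGpos x₀ x).le).symm]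
    exact Real.sqrt_le_sqrt hsq
  have hρ0 : 0 ≤ ρ := by
    apply Real.log_nonneg
    rw [le_div_iff₀ (hGpos x₀ x)]; simpa using hsqrt
  have hρt2ρ : ρt x₀ ≤ 2 * ρ := by
    have h2ρ : 2 * ρ = Real.log ((G x₀ x₀ * G x x) / G x₀ x ^ 2) := by
      rw [hρ]
      rw [show (2:ℝ) * Real.log (Real.sqrt (G x₀ x₀ * G x x) / G x₀ x)
          = Real.log ((Real.sqrt (G x₀ x₀ * G x x) / G x₀ x) ^ 2) by
        rw [Real.log_pow]; norm_num]
      congr 1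
      rw [div_pow, Real.sq_sqrt (mul_nonneg (hGpos x₀ x₀).le (hGpos x x).le)]
    rw [h2ρ]
    simp only [hρt]
    apply Real.log_le_log (div_pos (hGpos x x) (hGpos x₀ x))
    rw [div_le_div_iff₀ (hGpos x₀ x) (pow_pos (hGpos x₀ x) 2)]
    nlinarith [hGpos x x, hGpos x₀ x, hg2, mul_pos (hGpos x x) (hGpos x₀ x)]
  -- final computation
  have hGG : ∑ y, G x₀ y * G y x = (G * G) x₀ x := by
    rw [Matrix.mul_apply]
  rw [← Finset.sum_div, hGG, div_le_iff₀ (hGpos x₀ x)]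
  calc (G * G) x₀ x ≤ ε⁻¹ * (ρt x₀ + 1) * G x₀ x := hw0
  _ ≤ 2 / ε * (ρ + 1) * G x₀ x := by
      apply mul_le_mul_of_nonneg_right _ (hGpos x₀ x).le
      have : 2 / ε = 2 * ε⁻¹ := by ring
      rw [this]
      nlinarith [hρt2ρ, hρ0, hρt0 x₀, hεi]
end

section
/- If ε ≤ V(x) for all x, then ∑_y [G(0,y)G(y,x)/G(0,x)]² ≤ A_ε (ρ(x)+1), i.e., the squared ℓ² norm of the gradient of log G(0,x) with respect to the potential is bounded by a constant times ρ(x)+1. -/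
/-!
Conjugating by `diagonal √(1 + V)` turns `H` into `1 - K`, where `K` is symmetric, nonnegative
and has row sums at most `r = (1 + ε)⁻¹`. This leaves `ρ` unchanged and can only increase the
ratios `G(x₀,y) G(y,x) / G(x₀,x)`, so it suffices to treat `P = (1 - K)⁻¹ = ∑ Kⁿ`.

A Schur complement argument gives `P(x₀,y) P(y,x) ≤ P(y,y) P(x₀,x)`, and `P(y,y) ≤ (1 - r)⁻¹`.
Hence the sum of the squared ratios is at most `(1 - r)⁻¹ P²(x₀,x) / P(x₀,x)`. Finally
`P² = ∑ (n + 1) Kⁿ` with `Kⁿ(x₀,x) ≤ rⁿ` and `∑ Kⁿ(x₀,x) = P(x₀,x) ≥ exp (-ρ)`, so the extra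
weight `n + 1` costs at most a factor `O(ρ + 1)`.
-/

open Matrix Finset Real

lemma exists_hasSum_succ_mul_le {r : ℝ} (hr₀ : 0 < r) (hr : r < 1) :
    ∃ A > 0, ∀ (w : ℕ → ℝ) (W S L : ℝ), (∀ n, 0 ≤ w n) → (∀ n, w n ≤ r ^ n) →
      HasSum w W → HasSum (fun n => (n + 1) * w n) S → 0 ≤ L → exp (-L) ≤ W →
      S ≤ A * (L + 1) * W := by
  -- Compare `n + 1` with `exp (c (n + 1))`, still summable against `rⁿ = exp (-2 c n)`.
  set c := -log r / 2
  have hc : 0 < c := div_pos (neg_pos.2 (log_neg hr₀ hr)) two_pos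
  set q := exp c * r
  have hq₀ : 0 ≤ q := by positivity
  have hq₁ : q < 1 := by
    rw [show q = exp (log r / 2) by rw [show log r / 2 = c + log r by ring, exp_add, exp_log hr₀]]
    exact exp_lt_one_iff.2 (by linarith [log_neg hr₀ hr])
  set C := exp c * (1 - q)⁻¹
  have hC : 0 ≤ C := mul_nonneg (exp_pos c).le (inv_nonneg.2 (by linarith))
  refine ⟨(1 + C) / c, by positivity, fun w W S L hw₀ hwr hw hS hL hLW => ?_⟩
  have hpoint (n : ℕ) :
      ((n : ℝ) + 1) * w n ≤ L / c * w n + c⁻¹ * exp (-L) * exp c * q ^ n := by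
    have hn : (n + 1 : ℝ) ≤ L / c + c⁻¹ * exp (c * (n + 1) - L) := by
      have := add_one_le_exp (c * (n + 1) - L)
      calc (n + 1 : ℝ) = c⁻¹ * (c * (n + 1)) := by field_simp
        _ ≤ c⁻¹ * (L + exp (c * (n + 1) - L)) := by gcongr; linarith
        _ = L / c + c⁻¹ * exp (c * (n + 1) - L) := by ring
    have hexp : exp (c * (n + 1) - L) * r ^ n = exp (-L) * exp c * q ^ n := by
      rw [show c * (n + 1) - L = -L + c + n * c by ring, exp_add, exp_add, exp_nat_mul, mul_pow]
      ring
    calc ((n : ℝ) + 1) * w n ≤ (L / c + c⁻¹ * exp (c * (n + 1) - L)) * w n :=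
          mul_le_mul_of_nonneg_right hn (hw₀ n)
      _ ≤ L / c * w n + c⁻¹ * (exp (c * (n + 1) - L) * r ^ n) := by
          rw [add_mul, mul_assoc]; gcongr; exact hwr n
      _ = L / c * w n + c⁻¹ * exp (-L) * exp c * q ^ n := by rw [hexp]; ring
  have hsum := (hw.mul_left (L / c)).add
    ((hasSum_geometric_of_lt_one hq₀ hq₁).mul_left (c⁻¹ * exp (-L) * exp c))
  calc S ≤ L / c * W + c⁻¹ * exp (-L) * exp c * (1 - q)⁻¹ := hasSum_le hpoint hS hsum
    _ = L / c * W + c⁻¹ * C * exp (-L) := by ring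
    _ ≤ L / c * W + c⁻¹ * C * W := by gcongr
    _ = (L + C) * (W / c) := by ring
    _ ≤ ((1 + C) * (L + 1)) * (W / c) := by
        have : 0 ≤ W := (exp_pos _).le.trans hLW
        gcongr; nlinarith
    _ = (1 + C) / c * (L + 1) * W := by ring

namespace Matrix

variable {ι : Type*}

-- `ρ` of the paper.
noncomputable def greenDist (G : Matrix ι ι ℝ) (x y : ι) : ℝ :=
  log (√(G x x * G y y) / G x y)

-- `-∂ log G(x₀,x) / ∂ V(y)`, since `∂G / ∂V(y) = -G eᵧ eᵧᵀ G`.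
noncomputable def throughRatio (G : Matrix ι ι ℝ) (x₀ y x : ι) : ℝ :=
  G x₀ y * G y x / G x₀ x

section Fintype

variable [Fintype ι]

lemma sum_throughRatio (G : Matrix ι ι ℝ) (x₀ x : ι) :
    ∑ y, throughRatio G x₀ y x = (G * G) x₀ x / G x₀ x := by
  simp only [throughRatio, mul_apply, sum_div]

structure IsSubstochastic (K : Matrix ι ι ℝ) (r : ℝ) : Prop where
  nonneg : ∀ i j, 0 ≤ K i j
  rowSum_le : ∀ i, ∑ j, K i j ≤ r

variable {K : Matrix ι ι ℝ} {r : ℝ}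

lemma IsSubstochastic.bound_nonneg (hK : K.IsSubstochastic r) (i : ι) : 0 ≤ r :=
  (sum_nonneg fun j _ => hK.nonneg i j).trans (hK.rowSum_le i)

lemma IsSubstochastic.submatrix {κ : Type*} [Fintype κ] (hK : K.IsSubstochastic r)
    (f : κ ↪ ι) : (K.submatrix f f).IsSubstochastic r where
  nonneg i j := hK.nonneg (f i) (f j)
  rowSum_le i := by
    refine le_trans ?_ (hK.rowSum_le (f i))
    rw [show ∑ j, K.submatrix f f i j = ∑ j ∈ univ.map f, K (f i) j from (sum_map _ _ _).symm]
    exact sum_le_sum_of_subset_of_nonneg (subset_univ _) fun j _ _ => hK.nonneg (f i) j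

variable [DecidableEq ι]

lemma IsSubstochastic.sum_pow_apply_le (hK : K.IsSubstochastic r) (n : ℕ) (i : ι) :
    ∑ j, (K ^ n) i j ≤ r ^ n := by
  induction n with
  | zero => simp [one_apply]
  | succ n ih =>
    calc ∑ j, (K ^ (n + 1)) i j = ∑ z, (K ^ n) i z * ∑ j, K z j := by
          simp only [pow_succ, mul_apply, mul_sum]; exact sum_comm
      _ ≤ ∑ z, (K ^ n) i z * r := by
          gcongr with z; exacts [pow_apply_nonneg hK.nonneg n i z, hK.rowSum_le z]
      _ ≤ r ^ n * r := by
          rw [← sum_mul]; exact mul_le_mul_of_nonneg_right ih (hK.bound_nonneg i)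
      _ = r ^ (n + 1) := (pow_succ r n).symm

lemma IsSubstochastic.pow_apply_le (hK : K.IsSubstochastic r) (n : ℕ) (i j : ι) :
    (K ^ n) i j ≤ r ^ n :=
  (single_le_sum (fun z _ => pow_apply_nonneg hK.nonneg n i z) (mem_univ j)).trans
    (hK.sum_pow_apply_le n i)

lemma IsSubstochastic.summable_pow (hK : K.IsSubstochastic r) (hr : r < 1) :
    Summable fun n => K ^ n :=
  Pi.summable.2 fun i => Pi.summable.2 fun j =>
    (summable_geometric_of_lt_one (hK.bound_nonneg i) hr).of_nonneg_of_le
      (pow_apply_nonneg hK.nonneg · i j) (hK.pow_apply_le · i j)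

lemma IsSubstochastic.one_sub_mul_tsum_pow (hK : K.IsSubstochastic r) (hr : r < 1) :
    (1 - K) * ∑' n, K ^ n = 1 := by
  have hs := hK.summable_pow hr
  rw [sub_mul, one_mul, ← hs.tsum_mul_left, hs.tsum_eq_zero_add, pow_zero]
  simp [← pow_succ']

lemma IsSubstochastic.isUnit_det_one_sub (hK : K.IsSubstochastic r) (hr : r < 1) :
    IsUnit (1 - K).det :=
  isUnit_det_of_right_inverse (hK.one_sub_mul_tsum_pow hr)

lemma IsSubstochastic.hasSum_pow (hK : K.IsSubstochastic r) (hr : r < 1) :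
    HasSum (fun n => K ^ n) (1 - K)⁻¹ :=
  (inv_eq_right_inv (hK.one_sub_mul_tsum_pow hr)).symm ▸ (hK.summable_pow hr).hasSum

lemma IsSubstochastic.hasSum_pow_apply (hK : K.IsSubstochastic r) (hr : r < 1) (i j : ι) :
    HasSum (fun n => (K ^ n) i j) ((1 - K)⁻¹ i j) :=
  Pi.hasSum.1 (Pi.hasSum.1 (hK.hasSum_pow hr) i) j

lemma IsSubstochastic.one_sub_inv_apply_nonneg (hK : K.IsSubstochastic r) (hr : r < 1)
    (i j : ι) : 0 ≤ (1 - K)⁻¹ i j :=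
  (hK.hasSum_pow_apply hr i j).nonneg (pow_apply_nonneg hK.nonneg · i j)

lemma IsSubstochastic.one_le_one_sub_inv_apply_self (hK : K.IsSubstochastic r) (hr : r < 1)
    (i : ι) : 1 ≤ (1 - K)⁻¹ i i := by
  simpa using le_hasSum (hK.hasSum_pow_apply hr i i) 0 fun n _ => pow_apply_nonneg hK.nonneg n i i

lemma IsSubstochastic.one_sub_inv_apply_le (hK : K.IsSubstochastic r) (hr : r < 1) (i j : ι) :
    (1 - K)⁻¹ i j ≤ (1 - r)⁻¹ :=
  hasSum_le (hK.pow_apply_le · i j) (hK.hasSum_pow_apply hr i j)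
    (hasSum_geometric_of_lt_one (hK.bound_nonneg i) hr)

lemma IsSubstochastic.hasSum_succ_nsmul_pow (hK : K.IsSubstochastic r) (hr : r < 1) :
    HasSum (fun n => (n + 1) • K ^ n) ((1 - K)⁻¹ * (1 - K)⁻¹) := by
  have hP := hK.hasSum_pow hr
  have hpairs : Summable fun p : ℕ × ℕ => K ^ p.1 * K ^ p.2 := by
    refine Pi.summable.2 fun i => Pi.summable.2 fun j => ?_
    have hr₀ := hK.bound_nonneg i
    have hg := summable_geometric_of_lt_one hr₀ hr
    refine (hg.mul_of_nonneg hg (pow_nonneg hr₀) (pow_nonneg hr₀)).of_nonneg_of_le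
      (fun p => ?_) (fun p => ?_)
    · rw [← pow_add]; exact pow_apply_nonneg hK.nonneg _ i j
    · rw [← pow_add, ← pow_add]; exact hK.pow_apply_le _ i j
  have hdiag (n : ℕ) : ∑ kl ∈ antidiagonal n, K ^ kl.1 * K ^ kl.2 = (n + 1) • K ^ n := by
    rw [sum_congr rfl fun kl hkl => by rw [← pow_add, HasAntidiagonal.mem_antidiagonal.1 hkl],
      sum_const, Nat.card_antidiagonal]
  have hcauchy := hP.summable.tsum_mul_tsum_eq_tsum_sum_antidiagonal hP.summable hpairs
  simp only [hdiag] at hcauchy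
  rw [← hP.tsum_eq, hcauchy]
  exact ((summable_sum_mul_antidiagonal_of_summable_mul hpairs).congr hdiag).hasSum

lemma IsSubstochastic.hasSum_succ_mul_pow_apply (hK : K.IsSubstochastic r) (hr : r < 1)
    (i j : ι) :
    HasSum (fun n : ℕ => ((n : ℝ) + 1) * (K ^ n) i j) (((1 - K)⁻¹ * (1 - K)⁻¹) i j) := by
  simpa [nsmul_eq_mul] using Pi.hasSum.1 (Pi.hasSum.1 (hK.hasSum_succ_nsmul_pow hr) i) j

lemma submatrix_mul_schur_eq_one {α : Type*} [Field α] {M P : Matrix ι ι α} (hMP : M * P = 1)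
    {y : ι} (hy : P y y ≠ 0) :
    M.submatrix (↑) (↑) *
      (of fun p q : {i // i ≠ y} => P p q - P p y * P y q / P y y) = 1 := by
  ext p q
  let f j := M p j * (P j q - P j y * P y q / P y y)
  have hfy : f y = 0 := by simp only [f]; field_simp; ring
  have hf : ∑ j, f j = (1 : Matrix ι ι α) p q := by
    simp only [f, mul_sub, sum_sub_distrib, ← mul_apply, hMP, mul_div_assoc, ← mul_assoc,
      ← sum_mul, one_apply_ne p.2, zero_mul, sub_zero]
  rw [Fintype.sum_eq_add_sum_subtype_ne f y, hfy, zero_add] at hf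
  simp only [one_apply, Subtype.ext_iff] at hf ⊢
  rw [← hf, mul_apply]
  rfl

lemma IsSubstochastic.one_sub_inv_apply_mul_le (hK : K.IsSubstochastic r) (hr : r < 1)
    (a y b : ι) : (1 - K)⁻¹ a y * (1 - K)⁻¹ y b ≤ (1 - K)⁻¹ y y * (1 - K)⁻¹ a b := by
  set P := (1 - K)⁻¹
  rcases eq_or_ne a y with rfl | hay
  · rfl
  rcases eq_or_ne b y with rfl | hby
  · exact (mul_comm _ _).le
  have hPyy : 0 < P y y := one_pos.trans_le (hK.one_le_one_sub_inv_apply_self hr y)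
  -- Off `y`, the inverse of the principal submatrix `1 - K'` of `1 - K` is the Schur complement
  -- `P - P eᵧ eᵧᵀ P / P y y`; it is nonnegative because `K'` is again substochastic.
  have hschur := submatrix_mul_schur_eq_one
    (mul_nonsing_inv _ (hK.isUnit_det_one_sub hr)) hPyy.ne'
  have hsub (v : {i // i ≠ y} → ι) (hv : v.Injective) :
      (1 - K).submatrix v v = 1 - K.submatrix v v := by
    rw [← submatrix_one (α := ℝ) v hv]; rfl
  rw [hsub _ Subtype.val_injective] at hschur
  have hnonneg :=
    (hK.submatrix (.subtype (· ≠ y))).one_sub_inv_apply_nonneg hr ⟨a, hay⟩ ⟨b, hby⟩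
  rw [Function.Embedding.coe_subtype, inv_eq_right_inv hschur, of_apply, sub_nonneg,
    div_le_iff₀ hPyy] at hnonneg
  linarith

lemma IsSubstochastic.throughRatio_one_sub_inv_nonneg (hK : K.IsSubstochastic r) (hr : r < 1)
    (x₀ y x : ι) : 0 ≤ throughRatio (1 - K)⁻¹ x₀ y x := by
  have := hK.one_sub_inv_apply_nonneg hr
  exact div_nonneg (mul_nonneg (this _ _) (this _ _)) (this _ _)

lemma IsSubstochastic.throughRatio_one_sub_inv_le (hK : K.IsSubstochastic r) (hr : r < 1)
    {x₀ x : ι} (hpos : 0 < (1 - K)⁻¹ x₀ x) (y : ι) :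
    throughRatio (1 - K)⁻¹ x₀ y x ≤ (1 - r)⁻¹ :=
  ((div_le_iff₀ hpos).2 (hK.one_sub_inv_apply_mul_le hr x₀ y x)).trans
    (hK.one_sub_inv_apply_le hr y y)

lemma IsSubstochastic.greenDist_one_sub_inv_nonneg (hK : K.IsSubstochastic r) (hr : r < 1)
    (hKs : K.IsSymm) {x₀ x : ι} (hpos : 0 < (1 - K)⁻¹ x₀ x) :
    0 ≤ greenDist (1 - K)⁻¹ x₀ x := by
  have hsymm : ((1 - K)⁻¹).IsSymm := (isSymm_one.sub hKs).inv
  have hCS := hK.one_sub_inv_apply_mul_le hr x₀ x x₀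
  rw [hsymm.apply x₀ x, mul_comm ((1 - K)⁻¹ x x)] at hCS
  refine log_nonneg ((le_div_iff₀ hpos).2 ?_)
  rw [one_mul]
  exact le_sqrt_of_sq_le (by rw [sq]; exact hCS)

lemma IsSubstochastic.exp_neg_greenDist_one_sub_inv_le (hK : K.IsSubstochastic r) (hr : r < 1)
    {x₀ x : ι} (hpos : 0 < (1 - K)⁻¹ x₀ x) :
    exp (-greenDist (1 - K)⁻¹ x₀ x) ≤ (1 - K)⁻¹ x₀ x := by
  have hsqrt : 1 ≤ √((1 - K)⁻¹ x₀ x₀ * (1 - K)⁻¹ x x) := one_le_sqrt.2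
    (one_le_mul_of_one_le_of_one_le (hK.one_le_one_sub_inv_apply_self hr x₀)
      (hK.one_le_one_sub_inv_apply_self hr x))
  rw [greenDist, Real.exp_neg, exp_log (by positivity), inv_div]
  exact div_le_self hpos.le hsqrt

lemma throughRatio_diagonal_mul_mul_diagonal (G : Matrix ι ι ℝ) {e : ι → ℝ}
    (he : ∀ i, e i ≠ 0) (x₀ y x : ι) :
    throughRatio (diagonal e * G * diagonal e) x₀ y x = e y ^ 2 * throughRatio G x₀ y x := by
  simp only [throughRatio, mul_diagonal, diagonal_mul]
  have := he x₀; have := he x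
  field_simp

lemma greenDist_diagonal_mul_mul_diagonal (G : Matrix ι ι ℝ) {e : ι → ℝ}
    (he : ∀ i, 0 < e i) (x y : ι) :
    greenDist (diagonal e * G * diagonal e) x y = greenDist G x y := by
  simp only [greenDist, mul_diagonal, diagonal_mul]
  have := he x; have := he y
  rw [show e x * G x x * e x * (e y * G y y * e y) = (e x * e y) ^ 2 * (G x x * G y y) by ring,
    sqrt_mul (by positivity), sqrt_sq (by positivity),
    show e x * G x y * e y = (e x * e y) * G x y by ring, mul_div_mul_left _ _ (by positivity)]

lemma diagonal_mul_nonsing_inv_mul_diagonal {e : ι → ℝ} {H M : Matrix ι ι ℝ}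
    (he : ∀ i, e i ≠ 0) (hH : H = diagonal e * M * diagonal e) (hdet : IsUnit H.det) :
    diagonal e * H⁻¹ * diagonal e = M⁻¹ := by
  have hinv : diagonal e⁻¹ * diagonal e = 1 := by
    rw [diagonal_mul_diagonal, ← diagonal_one]
    exact congrArg diagonal (funext fun i => inv_mul_cancel₀ (he i))
  have hinv' : diagonal e * diagonal e⁻¹ = 1 := by
    rw [diagonal_mul_diagonal, ← diagonal_one]
    exact congrArg diagonal (funext fun i => mul_inv_cancel₀ (he i))
  have hM : M = diagonal e⁻¹ * H * diagonal e⁻¹ := by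
    rw [hH, mul_assoc, mul_assoc, hinv', mul_one, ← mul_assoc, hinv, one_mul]
  refine (inv_eq_right_inv ?_).symm
  rw [hM]
  simp only [← mul_assoc]
  rw [mul_assoc _ (diagonal e⁻¹), hinv, mul_one, mul_assoc _ H, mul_nonsing_inv _ hdet, mul_one,
    hinv]

end Fintype

theorem exists_sum_throughRatio_sq_le {r : ℝ} (hr₀ : 0 < r) (hr : r < 1) :
    ∃ C > 0, ∀ (ι : Type*) [Fintype ι] [DecidableEq ι] (K : Matrix ι ι ℝ),
      K.IsSubstochastic r → K.IsSymm → ∀ x₀ x, 0 < (1 - K)⁻¹ x₀ x →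
      ∑ y, throughRatio (1 - K)⁻¹ x₀ y x ^ 2 ≤
        C * (greenDist (1 - K)⁻¹ x₀ x + 1) := by
  obtain ⟨A, hA, hsum⟩ := exists_hasSum_succ_mul_le hr₀ hr
  have hr' : 0 < 1 - r := by linarith
  refine ⟨(1 - r)⁻¹ * A, by positivity, fun ι _ _ K hK hKs x₀ x hpos => ?_⟩
  set P := (1 - K)⁻¹
  have hPP := hsum (fun n => (K ^ n) x₀ x) _ _ _ (pow_apply_nonneg hK.nonneg · x₀ x)
    (hK.pow_apply_le · x₀ x) (hK.hasSum_pow_apply hr x₀ x)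
    (hK.hasSum_succ_mul_pow_apply hr x₀ x) (hK.greenDist_one_sub_inv_nonneg hr hKs hpos)
    (hK.exp_neg_greenDist_one_sub_inv_le hr hpos)
  calc ∑ y, throughRatio P x₀ y x ^ 2 ≤ ∑ y, (1 - r)⁻¹ * throughRatio P x₀ y x := by
        gcongr with y
        rw [sq]
        exact mul_le_mul_of_nonneg_right (hK.throughRatio_one_sub_inv_le hr hpos y)
          (hK.throughRatio_one_sub_inv_nonneg hr x₀ y x)
    _ = (1 - r)⁻¹ * ((P * P) x₀ x / P x₀ x) := by rw [← mul_sum, sum_throughRatio]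
    _ ≤ (1 - r)⁻¹ * A * (greenDist P x₀ x + 1) := by
        rw [mul_assoc]
        gcongr
        exact (div_le_iff₀ hpos).2 hPP

end Matrix

section Lattice

variable {ι : Type*} [Fintype ι]

lemma isSubstochastic_of_sqrt {ε c : ℝ} {V : ι → ℝ} {A : Matrix ι ι ℝ} (hε : 0 ≤ ε)
    (hV : ∀ i, ε ≤ V i) (hA : ∀ i j, 0 ≤ A i j) (hc : 0 ≤ c)
    (hAc : ∀ i, c * ∑ j, A i j ≤ 1) :
    (of fun i j => c * A i j / (√(1 + V i) * √(1 + V j))).IsSubstochastic (1 + ε)⁻¹ where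
  nonneg i j := div_nonneg (mul_nonneg hc (hA i j)) (by positivity)
  rowSum_le i := by
    have hsq (k : ι) : √(1 + ε) ≤ √(1 + V k) := sqrt_le_sqrt (by linarith [hV k])
    calc ∑ j, c * A i j / (√(1 + V i) * √(1 + V j)) ≤ ∑ j, c * A i j / (1 + ε) := by
          refine sum_le_sum fun j _ => div_le_div_of_nonneg_left (mul_nonneg hc (hA i j))
            (by linarith) ?_
          calc 1 + ε = √(1 + ε) * √(1 + ε) := (mul_self_sqrt (by linarith)).symm
            _ ≤ √(1 + V i) * √(1 + V j) :=
                mul_le_mul (hsq i) (hsq j) (sqrt_nonneg _) (sqrt_nonneg _)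
      _ = (c * ∑ j, A i j) / (1 + ε) := by rw [mul_sum, sum_div]
      _ ≤ (1 + ε)⁻¹ := by rw [inv_eq_one_div]; gcongr; exact hAc i

variable [DecidableEq ι]

lemma one_add_diagonal_sub_smul_eq {V : ι → ℝ} (hV : ∀ i, 0 < 1 + V i) (c : ℝ)
    (A : Matrix ι ι ℝ) :
    1 + diagonal V - c • A = diagonal (fun i => √(1 + V i)) *
      (1 - of fun i j => c * A i j / (√(1 + V i) * √(1 + V j))) *
        diagonal (fun i => √(1 + V i)) := by
  ext i j
  have hi := sqrt_pos.2 (hV i)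
  have hj := sqrt_pos.2 (hV j)
  rcases eq_or_ne i j with rfl | hij
  · simp [mul_diagonal, diagonal_mul]
    field_simp
    rw [sq_sqrt (hV i).le]
  · simp [mul_diagonal, diagonal_mul, hij]
    field_simp

end Lattice

theorem stmt10_general (d : ℕ) (ε : ℝ) (hε : 0 < ε) :
    ∃ C : ℝ, 0 < C ∧
      ∀ (ι : Type) [Fintype ι] [DecidableEq ι],
      ∀ (A : Matrix ι ι ℝ),
        (∀ i j, A i j = 0 ∨ A i j = 1) → A.IsSymm → (∀ i, A i i = 0) →
        (∀ i, ∑ j, A i j ≤ 2 * d) →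
      ∀ (V : ι → ℝ), (∀ i, ε ≤ V i) →
      ∀ (H G : Matrix ι ι ℝ),
        H = 1 + Matrix.diagonal V - ((2 * d : ℝ))⁻¹ • A →
        IsUnit H.det → G = H⁻¹ → (∀ i j, 0 < G i j) →
      ∀ x₀ x : ι,
        ∑ y, (G x₀ y * G y x / G x₀ x) ^ 2
          ≤ C * (Real.log (Real.sqrt (G x₀ x₀ * G x x) / G x₀ x) + 1) := by
  obtain ⟨C, hC, hbound⟩ := exists_sum_throughRatio_sq_le (r := (1 + ε)⁻¹) (by positivity)
    (inv_lt_one_of_one_lt₀ (by linarith))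
  refine ⟨C, hC, fun ι _ _ A hA01 hAs _ hArow V hV H G hH hdet hG hGpos x₀ x => ?_⟩
  have hV₁ (i : ι) : 0 < 1 + V i := by linarith [hV i]
  have he (i : ι) : 0 < √(1 + V i) := sqrt_pos.2 (hV₁ i)
  set K : Matrix ι ι ℝ := of fun i j => (2 * d : ℝ)⁻¹ * A i j / (√(1 + V i) * √(1 + V j))
  have hA (i j : ι) : 0 ≤ A i j := by rcases hA01 i j with h | h <;> simp [h]
  have hK : K.IsSubstochastic (1 + ε)⁻¹ := isSubstochastic_of_sqrt hε.le hV hA (by positivity)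
    fun i => by simpa using inv_mul_le_one_of_le₀ (hArow i) (by positivity)
  have hKs : K.IsSymm := .ext fun i j => by simp only [K, of_apply, hAs.apply i j, mul_comm]
  have hP : diagonal (fun i => √(1 + V i)) * G * diagonal (fun i => √(1 + V i)) = (1 - K)⁻¹ :=
    hG ▸ diagonal_mul_nonsing_inv_mul_diagonal (fun i => (he i).ne')
      (hH.trans (one_add_diagonal_sub_smul_eq hV₁ _ A)) hdet
  have hpos : 0 < (1 - K)⁻¹ x₀ x := by
    rw [← hP, mul_diagonal, diagonal_mul]; have := he x₀; have := he x; have := hGpos x₀ x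
    positivity
  calc ∑ y, (G x₀ y * G y x / G x₀ x) ^ 2 ≤ ∑ y, throughRatio (1 - K)⁻¹ x₀ y x ^ 2 := by
        refine sum_le_sum fun y _ => ?_
        have := hGpos x₀ y; have := hGpos y x; have := hGpos x₀ x
        gcongr
        rw [← hP, throughRatio_diagonal_mul_mul_diagonal G (fun i => (he i).ne'),
          sq_sqrt (hV₁ y).le]
        exact le_mul_of_one_le_left (by positivity) (by linarith [hV y])
    _ ≤ C * (greenDist (1 - K)⁻¹ x₀ x + 1) := hbound ι K hK hKs x₀ x hpos
    _ = C * (Real.log (Real.sqrt (G x₀ x₀ * G x x) / G x₀ x) + 1) := by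
        rw [← hP, greenDist_diagonal_mul_mul_diagonal G he]; rfl

/-- If `V ≥ ε > 0`, then `∑_y [G(0,y) G(y,x) / G(0,x)]² ≤ A_ε (ρ(x)+1)`:
the squared ℓ² norm of the gradient of `log G(0,x)` in the potential is bounded by a
constant (depending only on `ε` and `d`) times `ρ(x)+1`, uniformly over finite boxes. -/
theorem stmt10 (d : ℕ) (hd : 0 < d) (ε : ℝ) (hε : 0 < ε) :
    ∃ C : ℝ, 0 < C ∧
      ∀ (ι : Type) [Fintype ι] [DecidableEq ι],
      ∀ (A : Matrix ι ι ℝ),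
        (∀ i j, A i j = 0 ∨ A i j = 1) → A.IsSymm → (∀ i, A i i = 0) →
        (∀ i, ∑ j, A i j ≤ 2 * d) →
      ∀ (V : ι → ℝ), (∀ i, ε ≤ V i) →
      ∀ (H G : Matrix ι ι ℝ),
        H = 1 + Matrix.diagonal V - ((2 * d : ℝ))⁻¹ • A →
        IsUnit H.det → G = H⁻¹ → (∀ i j, 0 < G i j) →
      ∀ x₀ x : ι,
        ∑ y, (G x₀ y * G y x / G x₀ x) ^ 2
          ≤ C * (Real.log (Real.sqrt (G x₀ x₀ * G x x) / G x₀ x) + 1) :=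
  stmt10_general d ε hε
end

section
/- If ε ≤ V(x) ≤ M for all x, then the distance ρ satisfies the deterministic two-sided bound C_ε^{-1}‖x‖₁ ≤ ρ(x) ≤ C_M ‖x‖₁ for all x ∈ ℤ^d, with constants depending only on ε, M, and d. -/
namespace Stmt11Aux

def nrm {d : ℕ} (x : Fin d → ℤ) : ℤ := ∑ i, |x i|

lemma nrm_nonneg {d : ℕ} (x : Fin d → ℤ) : 0 ≤ nrm x :=
  Finset.sum_nonneg fun i _ => abs_nonneg _

lemma nrm_eq_zero {d : ℕ} {x : Fin d → ℤ} (h : nrm x = 0) : x = 0 := by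
  funext i
  have h2 := (Finset.sum_eq_zero_iff_of_nonneg (fun i _ => abs_nonneg (x i))).1 h i
    (Finset.mem_univ i)
  simpa [abs_eq_zero] using h2

lemma nrm_zero {d : ℕ} : nrm (0 : Fin d → ℤ) = 0 := by simp [nrm]

lemma nrm_neg {d : ℕ} (x : Fin d → ℤ) : nrm (-x) = nrm x := by
  unfold nrm; simp

lemma nrm_single {d : ℕ} (i : Fin d) : nrm (Pi.single i (1:ℤ)) = 1 := by
  unfold nrm
  simp [Pi.single_apply, apply_ite (abs : ℤ → ℤ)]

lemma nrm_le_add {d : ℕ} (a b : Fin d → ℤ) : nrm a ≤ nrm (a + b) + nrm b := by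
  unfold nrm
  rw [← Finset.sum_add_distrib]
  refine Finset.sum_le_sum fun j _ => ?_
  have h := abs_add_le ((a + b) j) (-(b j))
  simpa using h

lemma nrm_le_nrm_add_one {d : ℕ} (y : Fin d → ℤ) (i : Fin d) :
    nrm y - 1 ≤ nrm (y + Pi.single i 1) := by
  have := nrm_le_add y (Pi.single i 1)
  rw [nrm_single] at this
  linarith

lemma nrm_le_nrm_sub_one {d : ℕ} (y : Fin d → ℤ) (i : Fin d) :
    nrm y - 1 ≤ nrm (y - Pi.single i 1) := by
  have := nrm_le_add y (-(Pi.single i 1))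
  rw [← sub_eq_add_neg, nrm_neg, nrm_single] at this
  linarith

lemma nrm_sub_single_le {d : ℕ} {y : Fin d → ℤ} {i : Fin d} (h : 1 ≤ y i) :
    nrm (y - Pi.single i 1) ≤ nrm y - 1 := by
  have h1 : ∀ j, |(y - (Pi.single i 1 : Fin d → ℤ)) j| ≤ |y j| - (Pi.single i 1 : Fin d → ℤ) j := by
    intro j
    by_cases hj : j = i
    · subst hj
      simp only [Pi.sub_apply, Pi.single_eq_same]
      rw [abs_of_nonneg (by omega), abs_of_pos (by omega)]
    · simp [Pi.single_eq_of_ne hj]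
  calc nrm (y - Pi.single i 1) ≤ ∑ j, (|y j| - (Pi.single i 1 : Fin d → ℤ) j) :=
        Finset.sum_le_sum fun j _ => h1 j
    _ = nrm y - 1 := by
        rw [Finset.sum_sub_distrib]
        have : ∑ j, (Pi.single i 1 : Fin d → ℤ) j = 1 := by
          simp [Pi.single_apply]
        rw [this]; rfl

lemma nrm_add_single_le {d : ℕ} {y : Fin d → ℤ} {i : Fin d} (h : y i ≤ -1) :
    nrm (y + Pi.single i 1) ≤ nrm y - 1 := by
  have h1 : ∀ j, |(y + (Pi.single i 1 : Fin d → ℤ)) j| ≤ |y j| - (Pi.single i 1 : Fin d → ℤ) j := by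
    intro j
    by_cases hj : j = i
    · subst hj
      simp only [Pi.add_apply, Pi.single_eq_same]
      rw [abs_of_nonpos (by omega), abs_of_neg (by omega)]
      omega
    · simp [Pi.single_eq_of_ne hj]
  calc nrm (y + Pi.single i 1) ≤ ∑ j, (|y j| - (Pi.single i 1 : Fin d → ℤ) j) :=
        Finset.sum_le_sum fun j _ => h1 j
    _ = nrm y - 1 := by
        rw [Finset.sum_sub_distrib]
        have : ∑ j, (Pi.single i 1 : Fin d → ℤ) j = 1 := by
          simp [Pi.single_apply]
        rw [this]; rfl

/-- Bound on the averaged neighbor sum given a bound on the neighbors. -/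
lemma sum_nb_le {d : ℕ} (hd : 0 < d) (u : (Fin d → ℤ) → ℝ) (w : Fin d → ℤ) (B : ℝ)
    (h : ∀ i : Fin d, u (w + Pi.single i 1) ≤ B ∧ u (w - Pi.single i 1) ≤ B) :
    ((2 * d : ℝ))⁻¹ * ∑ i : Fin d, (u (w + Pi.single i 1) + u (w - Pi.single i 1)) ≤ B := by
  have hd' : (0:ℝ) < (d:ℝ) := by exact_mod_cast hd
  have hs : ∑ i : Fin d, (u (w + Pi.single i 1) + u (w - Pi.single i 1)) ≤ (d:ℝ) * (2*B) := by
    calc ∑ i : Fin d, (u (w + Pi.single i 1) + u (w - Pi.single i 1))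
        ≤ ∑ _i : Fin d, (2*B) := Finset.sum_le_sum fun i _ => by linarith [(h i).1, (h i).2]
      _ = (d:ℝ) * (2*B) := by
          simp [Finset.sum_const, Finset.card_univ, nsmul_eq_mul]
  calc ((2 * d : ℝ))⁻¹ * ∑ i : Fin d, (u (w + Pi.single i 1) + u (w - Pi.single i 1))
      ≤ ((2 * d : ℝ))⁻¹ * ((d:ℝ) * (2*B)) :=
        mul_le_mul_of_nonneg_left hs (by positivity)
    _ = ((2 * d : ℝ))⁻¹ * (2 * (d:ℝ)) * B := by ring
    _ = B := by rw [inv_mul_cancel₀ (by positivity), one_mul]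

/-- Maximum principle: the Green function `u = G(z, ·)` is maximized at `z`. -/
lemma maxp {d : ℕ} (hd : 0 < d) {ε : ℝ} (hε : 0 < ε) (V : (Fin d → ℤ) → ℝ)
    (hV : ∀ z, ε ≤ V z) (z : Fin d → ℤ) (u : (Fin d → ℤ) → ℝ)
    (heq : ∀ w, (1 + V w) * u w
        - ((2 * d : ℝ))⁻¹ * ∑ i : Fin d, (u (w + Pi.single i 1) + u (w - Pi.single i 1))
      = if w = z then 1 else 0)
    (hsum : Summable fun w => (u w) ^ 2) (hpos : ∀ w, 0 < u w) :
    ∀ w, u w ≤ u z := by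
  have hz := hpos z
  have htend : Filter.Tendsto (fun w => (u w)^2) Filter.cofinite (nhds 0) :=
    hsum.tendsto_cofinite_zero
  have hfin : {w : Fin d → ℤ | u z ≤ u w}.Finite := by
    have h1 : ∀ᶠ w in Filter.cofinite, (u w)^2 < (u z)^2 :=
      htend.eventually_lt_const (by positivity)
    refine (Filter.eventually_cofinite.1 h1).subset ?_
    intro w hw
    simp only [Set.mem_setOf_eq, not_lt]
    exact pow_le_pow_left₀ hz.le hw 2
  have hzmem : z ∈ hfin.toFinset := by simp
  obtain ⟨w₀, hw₀, hmax⟩ := Finset.exists_max_image hfin.toFinset u ⟨z, hzmem⟩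
  have hub : ∀ w, u w ≤ u w₀ := by
    intro w
    by_cases hw : u z ≤ u w
    · exact hmax w (by simpa using hw)
    · exact (le_of_lt (not_le.1 hw)).trans (hmax z hzmem)
  by_cases hw₀z : w₀ = z
  · intro w; rw [← hw₀z]; exact hub w
  · exfalso
    have hkey := heq w₀
    rw [if_neg hw₀z] at hkey
    have hS := sum_nb_le hd u w₀ (u w₀) (fun i => ⟨hub _, hub _⟩)
    have hA : (1 + ε) * u w₀ ≤ (1 + V w₀) * u w₀ :=
      mul_le_mul_of_nonneg_right (by linarith [hV w₀]) (hpos w₀).le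
    nlinarith [hpos w₀, hA, hkey, hS]

/-- Exponential decay of the Green function away from the source. -/
lemma shell {d : ℕ} (hd : 0 < d) {ε : ℝ} (hε : 0 < ε) (V : (Fin d → ℤ) → ℝ)
    (hV : ∀ z, ε ≤ V z) (z : Fin d → ℤ) (u : (Fin d → ℤ) → ℝ)
    (heq : ∀ w, (1 + V w) * u w
        - ((2 * d : ℝ))⁻¹ * ∑ i : Fin d, (u (w + Pi.single i 1) + u (w - Pi.single i 1))
      = if w = z then 1 else 0)
    (hsum : Summable fun w => (u w) ^ 2) (hpos : ∀ w, 0 < u w) :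
    ∀ n : ℕ, ∀ w, (n : ℤ) ≤ nrm (w - z) → u w ≤ u z / (1 + ε)^n := by
  intro n
  induction n with
  | zero =>
    intro w _
    simpa using maxp hd hε V hV z u heq hsum hpos w
  | succ n ih =>
    intro w hw
    have hwz : w ≠ z := by
      intro h
      subst h
      rw [sub_self, nrm_zero] at hw
      omega
    have hkey := heq w
    rw [if_neg hwz] at hkey
    have hppow : (0:ℝ) < (1+ε)^n := by positivity
    have hnb : ∀ i : Fin d,
        u (w + Pi.single i 1) ≤ u z / (1+ε)^n ∧ u (w - Pi.single i 1) ≤ u z / (1+ε)^n := by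
      intro i
      constructor
      · refine ih _ ?_
        have h1 := nrm_le_nrm_add_one (w - z) i
        rw [← add_sub_right_comm] at h1
        omega
      · refine ih _ ?_
        have h1 := nrm_le_nrm_sub_one (w - z) i
        rw [← sub_right_comm] at h1
        omega
    have hS := sum_nb_le hd u w (u z / (1+ε)^n) hnb
    have hA : (1 + ε) * u w ≤ (1 + V w) * u w :=
      mul_le_mul_of_nonneg_right (by linarith [hV w]) (hpos w).le
    have h3 : (1+ε) * u w ≤ u z / (1+ε)^n := by linarith
    have h4 : u w ≤ (u z / (1+ε)^n) / (1+ε) := by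
      rw [le_div_iff₀ (by linarith : (0:ℝ) < 1+ε)]
      linarith
    calc u w ≤ (u z / (1+ε)^n) / (1+ε) := h4
      _ = u z / (1+ε)^(n+1) := by rw [div_div, ← pow_succ]

/-- One-step Harnack bound for the Green function. -/
lemma step {d : ℕ} (hd : 0 < d) {M : ℝ} (hM : 0 ≤ M) (V : (Fin d → ℤ) → ℝ)
    (hV : ∀ z, V z ≤ M) (z : Fin d → ℤ) (u : (Fin d → ℤ) → ℝ)
    (heq : ∀ w, (1 + V w) * u w
        - ((2 * d : ℝ))⁻¹ * ∑ i : Fin d, (u (w + Pi.single i 1) + u (w - Pi.single i 1))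
      = if w = z then 1 else 0)
    (hpos : ∀ w, 0 < u w) (w : Fin d → ℤ) (i : Fin d) :
    u (w + Pi.single i 1) ≤ 2*d*(1+M) * u w ∧ u (w - Pi.single i 1) ≤ 2*d*(1+M) * u w := by
  have hdpos : (0:ℝ) < (d:ℝ) := by exact_mod_cast hd
  have hd' : (0:ℝ) < 2*(d:ℝ) := by linarith
  have hkey := heq w
  have hdel : (0:ℝ) ≤ (if w = z then (1:ℝ) else 0) := by split <;> norm_num
  have hS : ((2 * d : ℝ))⁻¹ * ∑ i : Fin d, (u (w + Pi.single i 1) + u (w - Pi.single i 1))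
      ≤ (1 + V w) * u w := by linarith
  have hterm : u (w + Pi.single i 1) + u (w - Pi.single i 1)
      ≤ ∑ i : Fin d, (u (w + Pi.single i 1) + u (w - Pi.single i 1)) :=
    Finset.single_le_sum (f := fun j : Fin d => u (w + Pi.single j 1) + u (w - Pi.single j 1))
      (fun j _ => by
        show (0:ℝ) ≤ u (w + Pi.single j 1) + u (w - Pi.single j 1)
        have := hpos (w + Pi.single j 1); have := hpos (w - Pi.single j 1); linarith)
      (Finset.mem_univ i)
  have hVu : (1 + V w) * u w ≤ (1 + M) * u w :=
    mul_le_mul_of_nonneg_right (by linarith [hV w]) (hpos w).le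
  have hmain : u (w + Pi.single i 1) + u (w - Pi.single i 1) ≤ 2*(d:ℝ)*((1+M) * u w) := by
    have h1 : ((2 * d : ℝ))⁻¹ * (u (w + Pi.single i 1) + u (w - Pi.single i 1))
        ≤ (1 + M) * u w := by
      have := mul_le_mul_of_nonneg_left hterm (by positivity : (0:ℝ) ≤ ((2 * d : ℝ))⁻¹)
      linarith
    have h2 := (inv_mul_le_iff₀ (by positivity : (0:ℝ) < (2 * d : ℝ))).1 h1
    linarith
  constructor
  · have := hpos (w - Pi.single i 1)
    nlinarith [hmain]
  · have := hpos (w + Pi.single i 1)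
    nlinarith [hmain]

/-- Lower bound on the diagonal. -/
lemma diag_lb {d : ℕ} {M : ℝ} (hM : 0 ≤ M) (V : (Fin d → ℤ) → ℝ)
    (hV : ∀ z, V z ≤ M) (z : Fin d → ℤ) (u : (Fin d → ℤ) → ℝ)
    (heq : ∀ w, (1 + V w) * u w
        - ((2 * d : ℝ))⁻¹ * ∑ i : Fin d, (u (w + Pi.single i 1) + u (w - Pi.single i 1))
      = if w = z then 1 else 0)
    (hpos : ∀ w, 0 < u w) : 1 ≤ (1 + M) * u z := by
  have hkey := heq z
  rw [if_pos rfl] at hkey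
  have hs : (0:ℝ) ≤ ((2 * d : ℝ))⁻¹ * ∑ i : Fin d, (u (z + Pi.single i 1) + u (z - Pi.single i 1)) := by
    apply mul_nonneg (by positivity)
    exact Finset.sum_nonneg fun i _ => by
      have := hpos (z + Pi.single i 1); have := hpos (z - Pi.single i 1); linarith
  have hVu : (1 + V z) * u z ≤ (1 + M) * u z :=
    mul_le_mul_of_nonneg_right (by linarith [hV z]) (hpos z).le
  linarith

/-- Upper bound on the diagonal. -/
lemma diag_ub {d : ℕ} (hd : 0 < d) {ε : ℝ} (hε : 0 < ε) (V : (Fin d → ℤ) → ℝ)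
    (hV : ∀ z, ε ≤ V z) (z : Fin d → ℤ) (u : (Fin d → ℤ) → ℝ)
    (heq : ∀ w, (1 + V w) * u w
        - ((2 * d : ℝ))⁻¹ * ∑ i : Fin d, (u (w + Pi.single i 1) + u (w - Pi.single i 1))
      = if w = z then 1 else 0)
    (hsum : Summable fun w => (u w) ^ 2) (hpos : ∀ w, 0 < u w) : ε * u z ≤ 1 := by
  have hub := maxp hd hε V hV z u heq hsum hpos
  have hkey := heq z
  rw [if_pos rfl] at hkey
  have hS := sum_nb_le hd u z (u z) (fun i => ⟨hub _, hub _⟩)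
  have hA : (1 + ε) * u z ≤ (1 + V z) * u z :=
    mul_le_mul_of_nonneg_right (by linarith [hV z]) (hpos z).le
  nlinarith [hA, hkey, hS]

/-- Path (Harnack chain) lower bound on the Green function. -/
lemma path {d : ℕ} (hd : 0 < d) {M : ℝ} (hM : 0 ≤ M) (V : (Fin d → ℤ) → ℝ)
    (hV : ∀ z, V z ≤ M) (z : Fin d → ℤ) (u : (Fin d → ℤ) → ℝ)
    (heq : ∀ w, (1 + V w) * u w
        - ((2 * d : ℝ))⁻¹ * ∑ i : Fin d, (u (w + Pi.single i 1) + u (w - Pi.single i 1))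
      = if w = z then 1 else 0)
    (hpos : ∀ w, 0 < u w) :
    ∀ n : ℕ, ∀ x, nrm (x - z) ≤ (n:ℤ) → u z ≤ (2*(d:ℝ)*(1+M))^n * u x := by
  have hdpos : (1:ℝ) ≤ (d:ℝ) := by exact_mod_cast hd
  have hK : (1:ℝ) ≤ 2*(d:ℝ)*(1+M) := by nlinarith
  intro n
  induction n with
  | zero =>
    intro x hx
    have h0 : nrm (x - z) = 0 := le_antisymm (by simpa using hx) (nrm_nonneg _)
    have hxz : x = z := by
      have := nrm_eq_zero h0
      rwa [sub_eq_zero] at this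
    subst hxz
    simp
  | succ n ih =>
    intro x hx
    by_cases hle : nrm (x - z) ≤ (n:ℤ)
    · have h1 := ih x hle
      have h2 : (2*(d:ℝ)*(1+M))^n * u x ≤ (2*(d:ℝ)*(1+M))^(n+1) * u x :=
        mul_le_mul_of_nonneg_right (pow_le_pow_right₀ hK (Nat.le_succ n)) (hpos x).le
      linarith
    · push_neg at hle
      obtain ⟨i, hi⟩ : ∃ i, (x - z) i ≠ 0 := by
        by_contra hc
        push_neg at hc
        have hx0 : x - z = 0 := funext fun j => hc j
        rw [hx0, nrm_zero] at hle
        omega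
      rcases lt_or_gt_of_ne hi with hneg | hposc
      · -- coordinate negative: move up
        have hx' : nrm ((x + Pi.single i 1) - z) ≤ (n:ℤ) := by
          rw [add_sub_right_comm]
          have := nrm_add_single_le (y := x - z) (i := i) (by omega)
          omega
        have h1 := ih _ hx'
        have h2 := (step hd hM V hV z u heq hpos x i).1
        calc u z ≤ (2*(d:ℝ)*(1+M))^n * u (x + Pi.single i 1) := h1
          _ ≤ (2*(d:ℝ)*(1+M))^n * (2*(d:ℝ)*(1+M) * u x) :=
              mul_le_mul_of_nonneg_left h2 (by positivity)
          _ = (2*(d:ℝ)*(1+M))^(n+1) * u x := by ring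
      · -- coordinate positive: move down
        have hx' : nrm ((x - Pi.single i 1) - z) ≤ (n:ℤ) := by
          rw [sub_right_comm]
          have := nrm_sub_single_le (y := x - z) (i := i) (by omega)
          omega
        have h1 := ih _ hx'
        have h2 := (step hd hM V hV z u heq hpos x i).2
        calc u z ≤ (2*(d:ℝ)*(1+M))^n * u (x - Pi.single i 1) := h1
          _ ≤ (2*(d:ℝ)*(1+M))^n * (2*(d:ℝ)*(1+M) * u x) :=
              mul_le_mul_of_nonneg_left h2 (by positivity)
          _ = (2*(d:ℝ)*(1+M))^(n+1) * u x := by ring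

end Stmt11Aux

set_option maxHeartbeats 1000000 in
open Stmt11Aux in
/-- If `ε ≤ V ≤ M`, then the Green's-function distance
`ρ(x) = log (√(G(0,0) G(x,x)) / G(0,x))` on `ℤ^d` satisfies the deterministic
two-sided bound `C₁⁻¹ ‖x‖₁ ≤ ρ(x) ≤ C₂ ‖x‖₁`, with constants depending only on
`ε`, `M` and `d`.  Here `G` is the (ℓ²) Green's function of
`H = 1 + diag V - (2d)⁻¹ Δ`, encoded by the pointwise equation `H G(z,·) = δ_z`
together with square-summability. -/
theorem stmt11 (d : ℕ) (hd : 0 < d) (ε M : ℝ) (hε : 0 < ε) (hεM : ε ≤ M) :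
    ∃ C₁ : ℝ, 0 < C₁ ∧ ∃ C₂ : ℝ, 0 < C₂ ∧
      ∀ (V : (Fin d → ℤ) → ℝ) (G : (Fin d → ℤ) → (Fin d → ℤ) → ℝ),
        (∀ z, ε ≤ V z) → (∀ z, V z ≤ M) →
        (∀ z w, (1 + V w) * G z w
            - ((2 * d : ℝ))⁻¹ *
              ∑ i : Fin d, (G z (w + Pi.single i 1) + G z (w - Pi.single i 1))
          = if w = z then 1 else 0) →
        (∀ z, Summable fun w => (G z w) ^ 2) →
        (∀ z w, 0 < G z w) → (∀ z w, G z w = G w z) →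
      ∀ x : Fin d → ℤ,
        C₁⁻¹ * ((∑ i, |x i| : ℤ) : ℝ)
            ≤ Real.log (Real.sqrt (G 0 0 * G x x) / G 0 x) ∧
          Real.log (Real.sqrt (G 0 0 * G x x) / G 0 x)
            ≤ C₂ * ((∑ i, |x i| : ℤ) : ℝ) := by
  have hM0 : (0:ℝ) ≤ M := le_trans hε.le hεM
  have hdR : (1:ℝ) ≤ (d:ℝ) := by exact_mod_cast hd
  have hK1 : (1:ℝ) < 2*(d:ℝ)*(1+M) := by nlinarith
  have hL2 : 0 < Real.log (2*(d:ℝ)*(1+M)) := Real.log_pos hK1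
  have hQ : (1:ℝ) ≤ (1+M)/ε := by
    rw [le_div_iff₀ hε]; linarith
  have hL1 : 0 ≤ Real.log ((1+M)/ε) := Real.log_nonneg hQ
  refine ⟨(Real.log (1+ε))⁻¹, inv_pos.2 (Real.log_pos (by linarith)),
    Real.log ((1+M)/ε) + Real.log (2*(d:ℝ)*(1+M)), by linarith, ?_⟩
  intro V G hVl hVu heq hsum hpos hsym x
  have hNnn : (0:ℤ) ≤ ∑ i, |x i| := Finset.sum_nonneg fun i _ => abs_nonneg _
  set n : ℕ := (∑ i, |x i|).toNat with hn
  have hNZ : ((∑ i, |x i| : ℤ)) = (n:ℤ) := (Int.toNat_of_nonneg hNnn).symm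
  have hNR : ((∑ i, |x i| : ℤ) : ℝ) = (n:ℝ) := by rw [hNZ]; push_cast; rfl
  have hnrmx : nrm x = (n:ℤ) := by unfold nrm; exact hNZ
  have ha := hpos 0 0
  have hb := hpos x x
  have hc := hpos 0 x
  -- lower bound
  have hsh1 := shell hd hε V hVl 0 (G 0) (heq 0) (hsum 0) (hpos 0) n x
    (by rw [sub_zero, hnrmx])
  have hsh2 := shell hd hε V hVl x (G x) (heq x) (hsum x) (hpos x) n 0
    (by rw [zero_sub, nrm_neg, hnrmx])
  rw [← hsym 0 x] at hsh2
  have ht : (0:ℝ) < (1+ε)^n := by positivity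
  have h1' : G 0 x * (1+ε)^n ≤ G 0 0 := (le_div_iff₀ ht).1 hsh1
  have h2' : G 0 x * (1+ε)^n ≤ G x x := (le_div_iff₀ ht).1 hsh2
  have hsq : (G 0 x * (1+ε)^n)^2 ≤ G 0 0 * G x x := by nlinarith [mul_pos hc ht]
  have hsqrt : G 0 x * (1+ε)^n ≤ Real.sqrt (G 0 0 * G x x) :=
    (Real.le_sqrt (by positivity) (by positivity)).2 hsq
  have hdivpos : (0:ℝ) < Real.sqrt (G 0 0 * G x x) / G 0 x := by positivity
  have hratio : (1+ε)^n ≤ Real.sqrt (G 0 0 * G x x) / G 0 x := by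
    rw [le_div_iff₀ hc]; linarith [hsqrt]
  have hlow : (n:ℝ) * Real.log (1+ε) ≤ Real.log (Real.sqrt (G 0 0 * G x x) / G 0 x) := by
    have h := Real.log_le_log ht hratio
    rwa [Real.log_pow] at h
  constructor
  · rw [inv_inv, hNR]
    linarith [hlow]
  · -- upper bound
    have hub1 := diag_ub hd hε V hVl 0 (G 0) (heq 0) (hsum 0) (hpos 0)
    have hub2 := diag_ub hd hε V hVl x (G x) (heq x) (hsum x) (hpos x)
    have hlb1 := diag_lb hM0 V hVu 0 (G 0) (heq 0) (hpos 0)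
    have hpath := path hd hM0 V hVu 0 (G 0) (heq 0) (hpos 0) n x (by rw [sub_zero, hnrmx])
    have hainv : G 0 0 ≤ 1/ε := (le_div_iff₀ hε).2 (by linarith)
    have hbinv : G x x ≤ 1/ε := (le_div_iff₀ hε).2 (by linarith)
    have hsab : Real.sqrt (G 0 0 * G x x) ≤ 1/ε := by
      rw [show (1/ε : ℝ) = Real.sqrt ((1/ε)*(1/ε)) from (Real.sqrt_mul_self (by positivity)).symm]
      apply Real.sqrt_le_sqrt
      nlinarith
    have hKn : (0:ℝ) < (2*(d:ℝ)*(1+M))^n := by positivity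
    have hcinv : (G 0 x)⁻¹ ≤ (1+M) * (2*(d:ℝ)*(1+M))^n := by
      rw [← one_div, div_le_iff₀ hc]
      nlinarith [hlb1, hpath, mul_pos hKn hc]
    have hup : Real.sqrt (G 0 0 * G x x) / G 0 x ≤ (1/ε) * ((1+M) * (2*(d:ℝ)*(1+M))^n) := by
      rw [div_eq_mul_inv]
      exact mul_le_mul hsab hcinv (by positivity) (by positivity)
    have hlog : Real.log (Real.sqrt (G 0 0 * G x x) / G 0 x)
        ≤ Real.log ((1/ε) * ((1+M) * (2*(d:ℝ)*(1+M))^n)) :=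
      Real.log_le_log hdivpos hup
    have hexp : Real.log ((1/ε) * ((1+M) * (2*(d:ℝ)*(1+M))^n))
        = Real.log ((1+M)/ε) + (n:ℝ) * Real.log (2*(d:ℝ)*(1+M)) := by
      have hM1 : (0:ℝ) < 1+M := by linarith
      rw [Real.log_mul (one_div_pos.2 hε).ne' (mul_pos hM1 hKn).ne',
          Real.log_mul hM1.ne' hKn.ne',
          Real.log_pow, Real.log_div one_ne_zero hε.ne', Real.log_one,
          Real.log_div hM1.ne' hε.ne']
      ring
    rcases Nat.eq_zero_or_pos n with hn0 | hn1
    · have hx0 : x = 0 := by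
        apply nrm_eq_zero
        rw [hnrmx, hn0]
        rfl
      rw [hNR, hn0, hx0]
      rw [Real.sqrt_mul_self (hpos 0 0).le, div_self (hpos 0 0).ne', Real.log_one]
      norm_num
    · rw [hNR]
      have hn1' : (1:ℝ) ≤ (n:ℝ) := by exact_mod_cast hn1
      have hcomb : Real.log ((1+M)/ε) + (n:ℝ) * Real.log (2*(d:ℝ)*(1+M))
          ≤ (n:ℝ) * (Real.log ((1+M)/ε) + Real.log (2*(d:ℝ)*(1+M))) := by nlinarith
      rw [hexp] at hlog
      linarith [hlog, hcomb]
end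

section
/- Convexity of log G: for each x, the function V ↦ log G(0,x) is convex on the set of nonnegative potentials; consequently V ↦ ρ(x) = -(1/2)[log(G(0,x)/G(0,0)) + log(G(0,x)/G(x,x))] is a concave function of V. -/
/-!
Write `H = D (1 - P)` with `D = diag (1 + V)` and `P = D⁻¹ B`, `B = (2d)⁻¹ A ≥ 0`. Positivity of
`H⁻¹` forces the Neumann series `∑ Pⁿ` to converge, so `G(i, j) = (∑ₙ Pⁿ)(i, j) (1 + V j)⁻¹`.
Every entry of `Pⁿ` is a sum of products of the factors `(1 + V k)⁻¹`, which are log-convex by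
weighted AM-GM, and Hölder's inequality shows that sums and series of log-convex functions are
log-convex. Hence `G(i, j)` is log-convex.

For `ρ`, the ratio `G(y, z) / G(z, z)` is the `(y, z)` entry of the inverse of `H` with row `z`
replaced by the unit vector `e_z`. That matrix is of the same shape, with `B` having row `z` erased
and `V z = 0`, so the ratio is again a walk series (walks stopped on reaching `z`), and hence
log-convex.
-/

open Matrix Real Set

/-- Hölder's inequality with exponents `1 / a` and `1 / b`. -/
theorem Real.tsum_rpow_mul_rpow_le {κ : Type*} {f g : κ → ℝ} {a b : ℝ} (ha : 0 < a)
    (hb : 0 < b) (hab : a + b = 1) (hf : ∀ k, 0 ≤ f k) (hg : ∀ k, 0 ≤ g k) (hfs : Summable f)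
    (hgs : Summable g) :
    (Summable fun k => f k ^ a * g k ^ b) ∧
      ∑' k, f k ^ a * g k ^ b ≤ (∑' k, f k) ^ a * (∑' k, g k) ^ b := by
  have hpq : a⁻¹.HolderConjugate b⁻¹ := ⟨by simpa using hab, by positivity, by positivity⟩
  have hcancel : ∀ {c : ℝ} {h : κ → ℝ}, c ≠ 0 → (∀ k, 0 ≤ h k) →
      (fun k => (h k ^ c) ^ c⁻¹) = h := fun hc hh =>
    funext fun k => by rw [← rpow_mul (hh k), mul_inv_cancel₀ hc, rpow_one]
  have key := summable_and_inner_le_Lp_mul_Lq_tsum_of_nonneg hpq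
    (fun k => rpow_nonneg (hf k) a) (fun k => rpow_nonneg (hg k) b)
    (by rwa [hcancel ha.ne' hf]) (by rwa [hcancel hb.ne' hg])
  rwa [hcancel ha.ne' hf, hcancel hb.ne' hg, one_div, one_div, inv_inv, inv_inv] at key

/-- Log-convexity in multiplicative form, which also makes sense where `f` vanishes. -/
def LogConvexOn {E : Type*} [AddCommMonoid E] [Module ℝ E] (s : Set E) (f : E → ℝ) : Prop :=
  (∀ x ∈ s, 0 ≤ f x) ∧ ∀ ⦃x⦄, x ∈ s → ∀ ⦃y⦄, y ∈ s → ∀ ⦃a b : ℝ⦄, 0 < a → 0 < b → a + b = 1 →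
    f (a • x + b • y) ≤ f x ^ a * f y ^ b

namespace LogConvexOn

variable {E : Type*} [AddCommMonoid E] [Module ℝ E] {s : Set E} {f g : E → ℝ}

theorem congr (hf : LogConvexOn s f) (hs : Convex ℝ s) (hfg : EqOn f g s) : LogConvexOn s g := by
  refine ⟨fun x hx => hfg hx ▸ hf.1 x hx, fun x hx y hy a b ha hb hab => ?_⟩
  rw [← hfg hx, ← hfg hy, ← hfg (hs hx hy ha.le hb.le hab)]
  exact hf.2 hx hy ha hb hab

theorem const {c : ℝ} (hc : 0 ≤ c) : LogConvexOn s fun _ => c := by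
  refine ⟨fun _ _ => hc, fun x _ y _ a b _ _ hab => ?_⟩
  rw [← rpow_add' hc (by simp [hab]), hab, rpow_one]

theorem mul (hf : LogConvexOn s f) (hg : LogConvexOn s g) (hs : Convex ℝ s) :
    LogConvexOn s fun x => f x * g x := by
  refine ⟨fun x hx => mul_nonneg (hf.1 x hx) (hg.1 x hx), fun x hx y hy a b ha hb hab => ?_⟩
  have hfx := hf.1 x hx; have hfy := hf.1 y hy; have hgx := hg.1 x hx; have hgy := hg.1 y hy
  calc f (a • x + b • y) * g (a • x + b • y)
      ≤ (f x ^ a * f y ^ b) * (g x ^ a * g y ^ b) :=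
        mul_le_mul (hf.2 hx hy ha hb hab) (hg.2 hx hy ha hb hab)
          (hg.1 _ (hs hx hy ha.le hb.le hab)) (by positivity)
    _ = (f x * g x) ^ a * (f y * g y) ^ b := by
        rw [mul_rpow hfx hgx, mul_rpow hfy hgy]
        ring

theorem tsum {κ : Type*} {f : κ → E → ℝ} (hf : ∀ k, LogConvexOn s (f k))
    (hsum : ∀ x ∈ s, Summable fun k => f k x) (hs : Convex ℝ s) :
    LogConvexOn s fun x => ∑' k, f k x := by
  refine ⟨fun x hx => tsum_nonneg fun k => (hf k).1 x hx,
    fun x hx y hy a b ha hb hab => ?_⟩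
  obtain ⟨hsum', hle⟩ := Real.tsum_rpow_mul_rpow_le ha hb hab (fun k => (hf k).1 x hx)
    (fun k => (hf k).1 y hy) (hsum x hx) (hsum y hy)
  exact (Summable.tsum_le_tsum (fun k => (hf k).2 hx hy ha hb hab)
    (hsum _ (hs hx hy ha.le hb.le hab)) hsum').trans hle

theorem sum {κ : Type*} [Fintype κ] {f : κ → E → ℝ} (hf : ∀ k, LogConvexOn s (f k))
    (hs : Convex ℝ s) : LogConvexOn s fun x => ∑ k, f k x := by
  simpa only [tsum_fintype] using tsum hf (fun x _ => .of_finite) hs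

theorem convexOn_log (hf : LogConvexOn s f) (hs : Convex ℝ s) (hpos : ∀ x ∈ s, 0 < f x) :
    ConvexOn ℝ s fun x => log (f x) := by
  refine convexOn_iff_forall_pos.2 ⟨hs, fun x hx y hy a b ha hb hab => ?_⟩
  have hfx := hpos x hx; have hfy := hpos y hy
  calc log (f (a • x + b • y)) ≤ log (f x ^ a * f y ^ b) :=
        log_le_log (hpos _ (hs hx hy ha.le hb.le hab)) (hf.2 hx hy ha hb hab)
    _ = a • log (f x) + b • log (f y) := by
        rw [log_mul (by positivity) (by positivity), log_rpow hfx, log_rpow hfy, smul_eq_mul,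
          smul_eq_mul]

end LogConvexOn

theorem convex_nonneg_orthant {ι : Type*} : Convex ℝ {U : ι → ℝ | ∀ i, 0 ≤ U i} := convex_Ici 0

theorem logConvexOn_inv_one_add_apply {ι : Type*} (k : ι) :
    LogConvexOn {U : ι → ℝ | ∀ i, 0 ≤ U i} fun U => (1 + U k)⁻¹ := by
  refine ⟨fun U hU => inv_nonneg.2 (by linarith [hU k]), fun U hU W hW a b ha hb hab => ?_⟩
  have hu : 0 < 1 + U k := by linarith [hU k]
  have hw : 0 < 1 + W k := by linarith [hW k]
  have amgm : (1 + U k) ^ a * (1 + W k) ^ b ≤ 1 + (a • U + b • W) k := by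
    have := geom_mean_le_arith_mean2_weighted ha.le hb.le hu.le hw.le hab
    simp only [Pi.add_apply, Pi.smul_apply, smul_eq_mul]
    linear_combination this + hab
  calc (1 + (a • U + b • W) k)⁻¹ ≤ ((1 + U k) ^ a * (1 + W k) ^ b)⁻¹ :=
        inv_anti₀ (by positivity) amgm
    _ = (1 + U k)⁻¹ ^ a * (1 + W k)⁻¹ ^ b := by
        rw [mul_inv, inv_rpow hu.le, inv_rpow hw.le]

namespace Matrix

variable {ι : Type*} [Fintype ι] [DecidableEq ι] {M : Matrix ι ι ℝ}

theorem summable_pow_apply_of_one_sub_mul_eq_one (hM : ∀ i j, 0 ≤ M i j)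
    {R : Matrix ι ι ℝ} (hR : ∀ i j, 0 ≤ R i j) (hMR : (1 - M) * R = 1) (i j : ι) :
    Summable fun n => (M ^ n) i j := by
  refine summable_of_sum_range_le (c := R i j) (fun n => pow_apply_nonneg hM n i j) fun N => ?_
  have hpartial : ∑ n ∈ Finset.range N, M ^ n = (1 - M ^ N) * R := by
    rw [← geom_sum_mul_neg, Matrix.mul_assoc, hMR, Matrix.mul_one]
  have htail : 0 ≤ (M ^ N * R) i j :=
    Finset.sum_nonneg fun k _ => mul_nonneg (pow_apply_nonneg hM N i k) (hR k j)
  rw [← Matrix.sum_apply, hpartial, Matrix.sub_mul, Matrix.one_mul, Matrix.sub_apply]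
  linarith

theorem one_sub_mul_tsum_pow_eq_one (hsum : ∀ i j, Summable fun n => (M ^ n) i j) :
    (1 - M) * of (fun i j => ∑' n, (M ^ n) i j) = 1 := by
  have hs : Summable (M ^ ·) := Pi.summable.2 fun i => Pi.summable.2 (hsum i)
  have htsum : of (fun i j => ∑' n, (M ^ n) i j) = ∑' n, M ^ n := by
    ext i j
    exact ((congrFun (tsum_apply hs) j).trans (tsum_apply (Pi.summable.2 (hsum i)))).symm
  rw [htsum, hs.one_sub_mul_tsum_pow]

theorem inv_one_sub_apply_eq_tsum (hsum : ∀ i j, Summable fun n => (M ^ n) i j)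
    (i j : ι) : (1 - M)⁻¹ i j = ∑' n, (M ^ n) i j := by
  rw [inv_eq_right_inv (one_sub_mul_tsum_pow_eq_one hsum), of_apply]

theorem pow_apply_le_pow_apply {N : Matrix ι ι ℝ} (hM : ∀ i j, 0 ≤ M i j)
    (hMN : ∀ i j, M i j ≤ N i j) (n : ℕ) (i j : ι) : (M ^ n) i j ≤ (N ^ n) i j := by
  induction n generalizing j with
  | zero => rfl
  | succ n ih =>
    rw [pow_succ, pow_succ, mul_apply, mul_apply]
    have hN : ∀ i j, 0 ≤ N i j := fun i j => (hM i j).trans (hMN i j)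
    exact Finset.sum_le_sum fun k _ =>
      mul_le_mul (ih k) (hMN k j) (hM k j) (pow_apply_nonneg hN n i k)

theorem isUnit_det_of_inv_apply_ne_zero {H : Matrix ι ι ℝ} {i j : ι} (h : H⁻¹ i j ≠ 0) :
    IsUnit H.det := by
  by_contra hH
  exact h (by rw [nonsing_inv_apply_not_isUnit _ hH, zero_apply])

theorem inv_updateRow_single_apply_mul {H : Matrix ι ι ℝ} (hH : IsUnit H.det) {z : ι}
    (hH' : IsUnit (H.updateRow z (Pi.single z 1)).det) (y : ι) :
    (H.updateRow z (Pi.single z 1))⁻¹ y z * H⁻¹ z z = H⁻¹ y z := by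
  set v : ι → ℝ := H⁻¹ *ᵥ Pi.single z 1
  have hv : ∀ i, v i = H⁻¹ i z := fun i => by simp [v]
  have hHv : H.updateRow z (Pi.single z 1) *ᵥ v = H⁻¹ z z • Pi.single z 1 := by
    rw [updateRow_mulVec, mulVec_mulVec, mul_nonsing_inv _ hH, one_mulVec, single_one_dotProduct,
      hv]
    ext i
    rcases eq_or_ne i z with rfl | hi <;> simp [Function.update, *]
  have := congrFun (congrArg ((H.updateRow z (Pi.single z 1))⁻¹ *ᵥ ·) hHv) y
  simp only [mulVec_mulVec, nonsing_inv_mul _ hH', one_mulVec, mulVec_smul, hv] at this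
  rw [this]
  simp [mul_comm]

end Matrix

section WalkExpansion

variable {ι : Type*} [Fintype ι] [DecidableEq ι] {B : Matrix ι ι ℝ} {U : ι → ℝ}

/-- The one-step matrix `D⁻¹ B`, `D = diag (1 + U)`, of the walk expansion of
`(1 + diag U - B)⁻¹ = ∑ₙ (D⁻¹ B)ⁿ D⁻¹`. -/
noncomputable def walkMatrix (B : Matrix ι ι ℝ) (U : ι → ℝ) : Matrix ι ι ℝ :=
  of fun i j => (1 + U i)⁻¹ * B i j

theorem one_add_diagonal_sub_eq (hU : ∀ i, 1 + U i ≠ 0) :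
    1 + diagonal U - B = diagonal (fun i => 1 + U i) * (1 - walkMatrix B U) := by
  ext i j
  rcases eq_or_ne i j with rfl | hij
  · simp [walkMatrix, mul_sub, mul_inv_cancel_left₀ (hU i)]
  · simp [walkMatrix, hij, mul_inv_cancel_left₀ (hU i)]

theorem inv_one_add_diagonal_sub_apply (hU : ∀ i, 1 + U i ≠ 0) (i j : ι) :
    (1 + diagonal U - B)⁻¹ i j = (1 - walkMatrix B U)⁻¹ i j * (1 + U j)⁻¹ := by
  have hD : (diagonal fun i => 1 + U i)⁻¹ = diagonal fun i => (1 + U i)⁻¹ :=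
    inv_eq_right_inv (by simp [diagonal_mul_diagonal, mul_inv_cancel₀ (hU _)])
  rw [one_add_diagonal_sub_eq hU, Matrix.mul_inv_rev, hD, mul_diagonal]

theorem isUnit_det_one_add_diagonal_sub_iff (hU : ∀ i, 1 + U i ≠ 0) :
    IsUnit (1 + diagonal U - B).det ↔ IsUnit (1 - walkMatrix B U).det := by
  rw [one_add_diagonal_sub_eq hU, det_mul, IsUnit.mul_iff, det_diagonal,
    and_iff_right (isUnit_iff_ne_zero.2 (Finset.prod_ne_zero_iff.2 fun i _ => hU i))]

theorem summable_walkMatrix_pow_apply (hB : ∀ i j, 0 ≤ B i j) (hU : ∀ i, 0 ≤ U i)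
    (hdet : IsUnit (1 + diagonal U - B).det) (hinv : ∀ i j, 0 ≤ (1 + diagonal U - B)⁻¹ i j)
    (i j : ι) : Summable fun n => (walkMatrix B U ^ n) i j := by
  have hU' : ∀ i, 1 + U i ≠ 0 := fun i => by linarith [hU i]
  refine summable_pow_apply_of_one_sub_mul_eq_one
    (fun i j => mul_nonneg (inv_nonneg.2 (by linarith [hU i])) (hB i j)) (fun i j => ?_)
    (mul_nonsing_inv _ ((isUnit_det_one_add_diagonal_sub_iff hU').1 hdet)) i j
  have := hinv i j
  rw [inv_one_add_diagonal_sub_apply hU'] at this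
  exact nonneg_of_mul_nonneg_left this (inv_pos.2 (by linarith [hU j]))

end WalkExpansion

section LogConvexity

variable {ι : Type*} [Fintype ι] [DecidableEq ι] {B : Matrix ι ι ℝ}

theorem logConvexOn_walkMatrix_pow_apply (hB : ∀ i j, 0 ≤ B i j) (n : ℕ) (i j : ι) :
    LogConvexOn {U : ι → ℝ | ∀ i, 0 ≤ U i} fun U => (walkMatrix B U ^ n) i j := by
  induction n generalizing j with
  | zero =>
    simp only [pow_zero]
    exact .const (by by_cases h : i = j <;> simp [one_apply, h])
  | succ n ih =>
    simp only [pow_succ, mul_apply, walkMatrix, of_apply]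
    exact LogConvexOn.sum (fun k => (ih k).mul ((logConvexOn_inv_one_add_apply k).mul
      (LogConvexOn.const (hB k j)) convex_nonneg_orthant) convex_nonneg_orthant)
      convex_nonneg_orthant

theorem logConvexOn_tsum_walkMatrix_pow_apply (hB : ∀ i j, 0 ≤ B i j)
    (hsum : ∀ U : ι → ℝ, (∀ i, 0 ≤ U i) → ∀ i j, Summable fun n => (walkMatrix B U ^ n) i j)
    (i j : ι) :
    LogConvexOn {U : ι → ℝ | ∀ i, 0 ≤ U i} fun U => ∑' n, (walkMatrix B U ^ n) i j :=
  .tsum (fun n => logConvexOn_walkMatrix_pow_apply hB n i j) (fun U hU => hsum U hU i j)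
    convex_nonneg_orthant

end LogConvexity

section Green

variable {ι : Type*} [DecidableEq ι] {B : Matrix ι ι ℝ}

theorem updateRow_one_add_diagonal_sub (U : ι → ℝ) (z : ι) :
    (1 + diagonal U - B).updateRow z (Pi.single z 1) =
      1 + diagonal (Function.update U z 0) - B.updateRow z 0 := by
  ext i j
  rcases eq_or_ne i z with rfl | hi
  · rcases eq_or_ne i j with rfl | hij <;> simp [*]
  · rcases eq_or_ne i j with rfl | hij <;> simp [*, one_apply]

theorem walkMatrix_updateRow_zero_update (U : ι → ℝ) (z : ι) :
    walkMatrix (B.updateRow z 0) (Function.update U z 0) = walkMatrix (B.updateRow z 0) U := by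
  ext i j
  rcases eq_or_ne i z with rfl | hi <;> simp [walkMatrix, *]

variable [Fintype ι]

theorem summable_walkMatrix_updateRow_zero_pow_apply (hB : ∀ i j, 0 ≤ B i j) {U : ι → ℝ}
    (hU : ∀ i, 0 ≤ U i) (hsum : ∀ i j, Summable fun n => (walkMatrix B U ^ n) i j)
    (z i j : ι) : Summable fun n => (walkMatrix (B.updateRow z 0) U ^ n) i j := by
  have hW : ∀ {B : Matrix ι ι ℝ}, (∀ i j, 0 ≤ B i j) → ∀ i j, 0 ≤ walkMatrix B U i j :=
    fun hB i j => mul_nonneg (inv_nonneg.2 (by linarith [hU i])) (hB i j)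
  have hB' : ∀ i j, 0 ≤ B.updateRow z 0 i j := fun i j => by
    rcases eq_or_ne i z with rfl | hi <;> simp [*]
  refine .of_nonneg_of_le (fun n => pow_apply_nonneg (hW hB') n i j)
    (fun n => pow_apply_le_pow_apply (hW hB') (fun k l => ?_) n i j) (hsum i j)
  rcases eq_or_ne k z with rfl | hk
  · simpa [walkMatrix] using hW hB k l
  · simp [walkMatrix, hk]

theorem inv_apply_div_inv_apply_eq_tsum (hB : ∀ i j, 0 ≤ B i j) {U : ι → ℝ}
    (hU : ∀ i, 0 ≤ U i) (hsum : ∀ i j, Summable fun n => (walkMatrix B U ^ n) i j) {z : ι}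
    (hz : (1 + diagonal U - B)⁻¹ z z ≠ 0) (y : ι) :
    (1 + diagonal U - B)⁻¹ y z / (1 + diagonal U - B)⁻¹ z z =
      ∑' n, (walkMatrix (B.updateRow z 0) U ^ n) y z := by
  have hU' : ∀ i, 1 + Function.update U z 0 i ≠ 0 := fun i => by
    rcases eq_or_ne i z with rfl | hi <;> simp [*]; linarith [hU i]
  have hsum' := summable_walkMatrix_updateRow_zero_pow_apply hB hU hsum z
  rw [← walkMatrix_updateRow_zero_update U z] at hsum'
  have hdet' : IsUnit (1 + diagonal (Function.update U z 0) - B.updateRow z 0).det :=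
    (isUnit_det_one_add_diagonal_sub_iff hU').2
      (isUnit_det_of_right_inverse (one_sub_mul_tsum_pow_eq_one hsum'))
  rw [div_eq_iff hz, ← inv_updateRow_single_apply_mul (isUnit_det_of_inv_apply_ne_zero hz)
    (by rwa [updateRow_one_add_diagonal_sub]), updateRow_one_add_diagonal_sub,
    inv_one_add_diagonal_sub_apply hU', inv_one_sub_apply_eq_tsum hsum',
    walkMatrix_updateRow_zero_update]
  simp

theorem summable_walkMatrix_pow_apply_of_inv_pos (hB : ∀ i j, 0 ≤ B i j)
    (hpos : ∀ U : ι → ℝ, (∀ i, 0 ≤ U i) → ∀ i j, 0 < (1 + diagonal U - B)⁻¹ i j) {U : ι → ℝ}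
    (hU : ∀ i, 0 ≤ U i) (i j : ι) :
    Summable fun n => (walkMatrix B U ^ n) i j :=
  summable_walkMatrix_pow_apply hB hU (isUnit_det_of_inv_apply_ne_zero (hpos U hU i j).ne')
    (fun i j => (hpos U hU i j).le) i j

theorem convexOn_log_inv_one_add_diagonal_sub_apply (hB : ∀ i j, 0 ≤ B i j)
    (hpos : ∀ U : ι → ℝ, (∀ i, 0 ≤ U i) → ∀ i j, 0 < (1 + diagonal U - B)⁻¹ i j) (i j : ι) :
    ConvexOn ℝ {U : ι → ℝ | ∀ i, 0 ≤ U i} fun U => log ((1 + diagonal U - B)⁻¹ i j) := by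
  have hsum := fun (U : ι → ℝ) (hU : ∀ i, 0 ≤ U i) =>
    summable_walkMatrix_pow_apply_of_inv_pos hB hpos hU
  have hG : LogConvexOn {U : ι → ℝ | ∀ i, 0 ≤ U i} fun U => (1 + diagonal U - B)⁻¹ i j :=
    ((logConvexOn_tsum_walkMatrix_pow_apply hB hsum i j).mul (logConvexOn_inv_one_add_apply j)
      convex_nonneg_orthant).congr convex_nonneg_orthant fun U hU => by
        rw [inv_one_add_diagonal_sub_apply (fun i => by linarith [hU i]),
          inv_one_sub_apply_eq_tsum (hsum U hU)]
  exact hG.convexOn_log convex_nonneg_orthant fun U hU => hpos U hU i j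

theorem convexOn_log_inv_one_add_diagonal_sub_apply_div (hB : ∀ i j, 0 ≤ B i j)
    (hpos : ∀ U : ι → ℝ, (∀ i, 0 ≤ U i) → ∀ i j, 0 < (1 + diagonal U - B)⁻¹ i j) (y z : ι) :
    ConvexOn ℝ {U : ι → ℝ | ∀ i, 0 ≤ U i} fun U =>
      log ((1 + diagonal U - B)⁻¹ y z / (1 + diagonal U - B)⁻¹ z z) := by
  have hsum := fun (U : ι → ℝ) (hU : ∀ i, 0 ≤ U i) =>
    summable_walkMatrix_pow_apply_of_inv_pos hB hpos hU
  have hB' : ∀ i j, 0 ≤ B.updateRow z 0 i j := fun i j => by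
    rcases eq_or_ne i z with rfl | hi <;> simp [*]
  have hF : LogConvexOn {U : ι → ℝ | ∀ i, 0 ≤ U i} fun U =>
      (1 + diagonal U - B)⁻¹ y z / (1 + diagonal U - B)⁻¹ z z :=
    (logConvexOn_tsum_walkMatrix_pow_apply hB'
      (fun U hU => summable_walkMatrix_updateRow_zero_pow_apply hB hU (hsum U hU) z) y z).congr
      convex_nonneg_orthant fun U hU =>
        (inv_apply_div_inv_apply_eq_tsum hB hU (hsum U hU) (hpos U hU z z).ne' y).symm
  exact hF.convexOn_log convex_nonneg_orthant fun U hU => div_pos (hpos U hU y z) (hpos U hU z z)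

end Green

theorem stmt12_general (d : ℕ) (ι : Type*) [Fintype ι] [DecidableEq ι]
    (A : Matrix ι ι ℝ) (hA01 : ∀ i j, A i j = 0 ∨ A i j = 1) (hAsym : A.IsSymm)
    (Hm : (ι → ℝ) → Matrix ι ι ℝ)
    (hHm : ∀ W : ι → ℝ, Hm W = 1 + Matrix.diagonal W - ((2 * d : ℝ))⁻¹ • A)
    (hpos : ∀ W : ι → ℝ, (∀ i, 0 ≤ W i) → ∀ i j, 0 < (Hm W)⁻¹ i j)
    (x₀ x : ι) :
    ConvexOn ℝ {V : ι → ℝ | ∀ i, 0 ≤ V i}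
        (fun V => Real.log ((Hm V)⁻¹ x₀ x)) ∧
      ConcaveOn ℝ {V : ι → ℝ | ∀ i, 0 ≤ V i}
        (fun V => -(1 / 2) *
          (Real.log ((Hm V)⁻¹ x₀ x / (Hm V)⁻¹ x₀ x₀)
            + Real.log ((Hm V)⁻¹ x₀ x / (Hm V)⁻¹ x x))) := by
  set B := ((2 * d : ℝ))⁻¹ • A
  have hB : ∀ i j, 0 ≤ B i j := fun i j => by rcases hA01 i j with h | h <;> simp [B, h]
  have hG_symm : ∀ V, (Hm V)⁻¹ x₀ x = (Hm V)⁻¹ x x₀ := fun V => by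
    rw [hHm]
    exact (((isSymm_one.add (isSymm_diagonal V)).sub (hAsym.smul _)).inv).apply x x₀
  simp only [hHm] at hpos hG_symm ⊢
  refine ⟨convexOn_log_inv_one_add_diagonal_sub_apply hB hpos x₀ x, ?_⟩
  have h₁ := convexOn_log_inv_one_add_diagonal_sub_apply_div hB hpos x x₀
  have h₂ := convexOn_log_inv_one_add_diagonal_sub_apply_div hB hpos x₀ x
  refine ((h₁.add h₂).smul (c := 1 / 2) (by norm_num)).neg.congr fun V _ => ?_
  simp only [Pi.neg_apply, Pi.add_apply, smul_eq_mul, hG_symm]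
  ring

/-- For each `x`, the map `V ↦ log G(0,x)` (with `G = (Hm V)⁻¹`,
`Hm V = 1 + diag V - (2d)⁻¹ A`) is convex on the set of nonnegative potentials;
consequently `V ↦ ρ(x) = -(1/2)[log (G(0,x)/G(0,0)) + log (G(0,x)/G(x,x))]`
is concave there. -/
theorem stmt12 (d : ℕ) (hd : 0 < d) (ι : Type*) [Fintype ι] [DecidableEq ι]
    (A : Matrix ι ι ℝ) (hA01 : ∀ i j, A i j = 0 ∨ A i j = 1) (hAsym : A.IsSymm)
    (hAdiag : ∀ i, A i i = 0) (hArow : ∀ i, ∑ j, A i j ≤ 2 * d)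
    (Hm : (ι → ℝ) → Matrix ι ι ℝ)
    (hHm : ∀ W : ι → ℝ, Hm W = 1 + Matrix.diagonal W - ((2 * d : ℝ))⁻¹ • A)
    (hpd : ∀ W : ι → ℝ, (∀ i, 0 ≤ W i) → (Hm W).PosDef)
    (hpos : ∀ W : ι → ℝ, (∀ i, 0 ≤ W i) → ∀ i j, 0 < (Hm W)⁻¹ i j)
    (x₀ x : ι) :
    ConvexOn ℝ {V : ι → ℝ | ∀ i, 0 ≤ V i}
        (fun V => Real.log ((Hm V)⁻¹ x₀ x)) ∧
      ConcaveOn ℝ {V : ι → ℝ | ∀ i, 0 ≤ V i}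
        (fun V => -(1 / 2) *
          (Real.log ((Hm V)⁻¹ x₀ x / (Hm V)⁻¹ x₀ x₀)
            + Real.log ((Hm V)⁻¹ x₀ x / (Hm V)⁻¹ x x))) :=
  stmt12_general d ι A hA01 hAsym Hm hHm hpos x₀ x
end

section
/- Averaging trick estimate: for any x with ‖x‖₁ ≥ 2 and m = ⌊‖x‖₁^{1/4}⌋+1, the averaged quantity F = -(1/#B) ∑_{z∈B} log G(z, x+z), where B is the ℓ¹ ball of radius m around 0, satisfies |ρ(x) - F| ≤ C_{a,b} m, provided a ≤ V ≤ b. -/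
/-!
At `w`, the equation `H G(u, ·) = δ_u` together with `V ≤ b` bounds `G(u, w ± eᵢ)` by
`2d(1 + b) G(u, w)`. Chaining this along lattice paths in both arguments (using the symmetry
of `G`) shows that `G(z, x + z)` and `G(0, x)` agree up to a factor `(2d(1 + b))^(2m)` when
`‖z‖₁ ≤ m`. On the diagonal, `(1 + b)⁻¹ ≤ G(y, y)` by positivity of the neighbour terms,
and `G(y, y) ≤ a⁻¹` by pairing the equation with `G(y, ·)` in `ℓ²`: Cauchy–Schwarz bounds the
neighbour terms by `‖G(y, ·)‖²`, leaving `a ‖G(y, ·)‖² ≤ G(y, y)`. Hence every summand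
`ρ(x) + log G(z, x + z)` of the average is `O(m)`.
-/

open Finset

theorem summable_mul_comp_equiv {α : Type*} {f : α → ℝ} (hf : Summable fun x => f x ^ 2)
    (σ : α ≃ α) : Summable fun x => f x * f (σ x) := by
  have hfσ : Summable fun x => f (σ x) ^ 2 := σ.summable_iff.mpr hf
  refine ((hf.add hfσ).div_const 2).of_norm_bounded fun x => ?_
  rw [Real.norm_eq_abs, abs_mul, ← sq_abs (f x), ← sq_abs (f (σ x))]
  nlinarith [two_mul_le_add_sq |f x| |f (σ x)|]

theorem tsum_mul_comp_equiv_le {α : Type*} {f : α → ℝ} (hf : Summable fun x => f x ^ 2)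
    (σ : α ≃ α) : ∑' x, f x * f (σ x) ≤ ∑' x, f x ^ 2 := by
  have hfσ : Summable fun x => f (σ x) ^ 2 := σ.summable_iff.mpr hf
  calc ∑' x, f x * f (σ x) ≤ ∑' x, (f x ^ 2 + f (σ x) ^ 2) / 2 :=
        (summable_mul_comp_equiv hf σ).tsum_le_tsum
          (fun x => by nlinarith [two_mul_le_add_sq (f x) (f (σ x))])
          ((hf.add hfσ).div_const 2)
    _ = ∑' x, f x ^ 2 := by
        rw [tsum_div_const, hf.tsum_add hfσ, σ.tsum_eq (fun x => f x ^ 2), add_self_div_two]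

theorem abs_sub_neg_average_le {ι : Type*} {s : Finset ι} (hs : s.Nonempty) {f : ι → ℝ}
    {r M : ℝ} (h : ∀ z ∈ s, |r + f z| ≤ M) :
    |r - -(1 / (#s : ℝ)) * ∑ z ∈ s, f z| ≤ M := by
  have hcard : (0 : ℝ) < #s := by exact_mod_cast hs.card_pos
  have hmean : r - -(1 / (#s : ℝ)) * ∑ z ∈ s, f z = (∑ z ∈ s, (r + f z)) / #s := by
    rw [sum_add_distrib, sum_const, nsmul_eq_mul]
    field_simp
    ring
  rw [hmean, abs_div, abs_of_pos hcard, div_le_iff₀ hcard]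
  calc |∑ z ∈ s, (r + f z)| ≤ ∑ z ∈ s, |r + f z| := abs_sum_le_sum_abs _ _
    _ ≤ #s • M := sum_le_card_nsmul _ _ _ h
    _ = M * #s := by rw [nsmul_eq_mul, mul_comm]

theorem Real.log_sqrt_mul_div {p q r : ℝ} (hp : 0 < p) (hq : 0 < q) (hr : 0 < r) :
    Real.log (Real.sqrt (p * q) / r) = (Real.log p + Real.log q) / 2 - Real.log r := by
  rw [Real.log_div (Real.sqrt_pos.mpr (mul_pos hp hq)).ne' hr.ne',
    Real.log_sqrt (mul_pos hp hq).le, Real.log_mul hp.ne' hq.ne']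

section Lattice

variable {d : ℕ}

theorem sum_abs_add_single_sub (w w' : Fin d → ℤ) (i : Fin d) (s : ℤ) :
    ∑ j, |(w + Pi.single i s : Fin d → ℤ) j - w' j|
      = ∑ j, |w j - w' j| + (|w i + s - w' i| - |w i - w' i|) := by
  have hterm : ∀ j, |(w + Pi.single i s : Fin d → ℤ) j - w' j|
      = |w j - w' j| + if j = i then |w i + s - w' i| - |w i - w' i| else 0 := by
    intro j
    rcases eq_or_ne j i with rfl | hj
    · simp
    · simp [hj]
  simp only [hterm, sum_add_distrib, sum_ite_eq', mem_univ, if_true]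

theorem exists_neighbor_sum_abs_sub_add_one {w w' : Fin d → ℤ} (h : w ≠ w') :
    ∃ i, ∃ v ∈ ({w + Pi.single i 1, w - Pi.single i 1} : Set (Fin d → ℤ)),
      ∑ j, |v j - w' j| + 1 = ∑ j, |w j - w' j| := by
  obtain ⟨i, hi⟩ := Function.ne_iff.mp h
  refine ⟨i, ?_⟩
  rcases hi.lt_or_gt with hlt | hgt
  · refine ⟨_, Or.inl rfl, ?_⟩
    rw [sum_abs_add_single_sub, abs_of_nonpos (by omega), abs_of_neg (by omega)]
    ring
  · refine ⟨_, Or.inr rfl, ?_⟩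
    rw [sub_eq_add_neg, ← Pi.single_neg, sum_abs_add_single_sub, abs_of_nonneg (by omega),
      abs_of_pos (by omega)]
    ring

theorem le_pow_mul_of_add_single_add_sub_single_le {f : (Fin d → ℤ) → ℝ} {c : ℝ}
    (hf : ∀ w, 0 ≤ f w) (hc : 1 ≤ c)
    (hstep : ∀ w i, f (w + Pi.single i 1) + f (w - Pi.single i 1) ≤ c * f w)
    {n : ℕ} {w w' : Fin d → ℤ} (hn : ∑ i, |w i - w' i| ≤ n) : f w' ≤ c ^ n * f w := by
  have hdist : ∀ v : Fin d → ℤ, 0 ≤ ∑ i, |v i - w' i| :=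
    fun v => sum_nonneg fun i _ => abs_nonneg _
  induction n generalizing w with
  | zero =>
    obtain rfl : w = w' := by
      by_contra hne
      obtain ⟨i, v, -, hv⟩ := exists_neighbor_sum_abs_sub_add_one hne
      push_cast at hn
      linarith [hdist v]
    simp
  | succ n ih =>
    by_cases hne : w = w'
    · subst hne
      exact le_mul_of_one_le_left (hf w) (one_le_pow₀ hc)
    obtain ⟨i, v, hv, hvdist⟩ := exists_neighbor_sum_abs_sub_add_one hne
    have hvw : f v ≤ c * f w := by
      rcases hv with rfl | rfl <;>
        linarith [hstep w i, hf (w + Pi.single i 1), hf (w - Pi.single i 1)]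
    calc f w' ≤ c ^ n * f v := ih (by push_cast at hn; linarith)
      _ ≤ c ^ n * (c * f w) := by gcongr
      _ = c ^ (n + 1) * f w := by ring

end Lattice

/-- `H G(z, ·) = δ_z` for `H = 1 + V - P`, with `P` the nearest-neighbour average on `ℤ^d`. -/
def IsGreenFunction {d : ℕ} (V : (Fin d → ℤ) → ℝ)
    (G : (Fin d → ℤ) → (Fin d → ℤ) → ℝ) : Prop :=
  ∀ z w, (1 + V w) * G z w
      - ((2 * d : ℝ))⁻¹ * ∑ i : Fin d, (G z (w + Pi.single i 1) + G z (w - Pi.single i 1))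
    = if w = z then 1 else 0

namespace IsGreenFunction

variable {d : ℕ} {V : (Fin d → ℤ) → ℝ} {G : (Fin d → ℤ) → (Fin d → ℤ) → ℝ}

theorem inv_one_add_le_apply_self (hG : IsGreenFunction V G) (hG0 : ∀ z w, 0 ≤ G z w)
    {b : ℝ} (hVb : ∀ w, V w ≤ b) (y : Fin d → ℤ) : (1 + b)⁻¹ ≤ G y y := by
  have h := hG y y
  rw [if_pos rfl] at h
  have hN : 0 ≤ (2 * d : ℝ)⁻¹ *
      ∑ i : Fin d, (G y (y + Pi.single i 1) + G y (y - Pi.single i 1)) :=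
    mul_nonneg (by positivity) (sum_nonneg fun i _ => add_nonneg (hG0 _ _) (hG0 _ _))
  have h1 : 1 ≤ (1 + b) * G y y := by nlinarith [hVb y, hG0 y y]
  have hb : 0 < 1 + b := by
    by_contra! hb
    nlinarith [mul_nonpos_of_nonpos_of_nonneg hb (hG0 y y)]
  exact (inv_le_iff_one_le_mul₀' hb).mpr h1

theorem add_single_add_sub_single_le (hG : IsGreenFunction V G) (hG0 : ∀ z w, 0 ≤ G z w)
    {b : ℝ} (hVb : ∀ w, V w ≤ b) (u w : Fin d → ℤ) (i : Fin d) :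
    G u (w + Pi.single i 1) + G u (w - Pi.single i 1) ≤ 2 * d * (1 + b) * G u w := by
  have hd : (0 : ℝ) < 2 * d := by have := i.pos; positivity
  have hi : G u (w + Pi.single i 1) + G u (w - Pi.single i 1)
      ≤ ∑ j : Fin d, (G u (w + Pi.single j 1) + G u (w - Pi.single j 1)) :=
    single_le_sum (f := fun j => G u (w + Pi.single j 1) + G u (w - Pi.single j 1))
      (fun j _ => add_nonneg (hG0 _ _) (hG0 _ _)) (mem_univ i)
  have hδ : (0 : ℝ) ≤ if w = u then 1 else 0 := by split_ifs <;> norm_num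
  have hGw := hG u w
  calc G u (w + Pi.single i 1) + G u (w - Pi.single i 1)
      ≤ 2 * d * ((2 * d : ℝ)⁻¹ *
          ∑ j : Fin d, (G u (w + Pi.single j 1) + G u (w - Pi.single j 1))) := by
        rwa [← mul_assoc, mul_inv_cancel₀ hd.ne', one_mul]
    _ ≤ 2 * d * ((1 + b) * G u w) := by
        refine mul_le_mul_of_nonneg_left ?_ hd.le
        nlinarith [hVb w, hG0 u w]
    _ = 2 * d * (1 + b) * G u w := by ring

theorem mul_tsum_sq_le_apply_self (hG : IsGreenFunction V G) {a : ℝ} (hVa : ∀ w, a ≤ V w)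
    {z : Fin d → ℤ} (hsq : Summable fun w => G z w ^ 2) : a * ∑' w, G z w ^ 2 ≤ G z z := by
  set S := ∑' w, G z w ^ 2
  set N : (Fin d → ℤ) → ℝ :=
    fun w => ∑ i : Fin d, (G z (w + Pi.single i 1) + G z (w - Pi.single i 1))
  have hshift : ∀ i : Fin d, Summable (fun w => G z w * G z (w + Pi.single i (1 : ℤ))) ∧
      Summable (fun w => G z w * G z (w - Pi.single i (1 : ℤ))) := fun i =>
    ⟨summable_mul_comp_equiv hsq (Equiv.addRight (Pi.single i 1)),
      summable_mul_comp_equiv hsq (Equiv.subRight (Pi.single i 1))⟩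
  have hGN : Summable fun w => G z w * N w := by
    simp only [N, mul_sum, mul_add]
    exact summable_sum fun i _ => (hshift i).1.add (hshift i).2
  have hGN_le : ∑' w, G z w * N w ≤ 2 * d * S := by
    simp only [N, mul_sum, mul_add]
    rw [Summable.tsum_finsetSum fun i _ => (hshift i).1.add (hshift i).2]
    calc ∑ i : Fin d,
          ∑' w, (G z w * G z (w + Pi.single i 1) + G z w * G z (w - Pi.single i 1))
        ≤ ∑ _i : Fin d, (S + S) := sum_le_sum fun i _ => by
          rw [(hshift i).1.tsum_add (hshift i).2]
          exact add_le_add (tsum_mul_comp_equiv_le hsq (Equiv.addRight (Pi.single i 1)))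
            (tsum_mul_comp_equiv_le hsq (Equiv.subRight (Pi.single i 1)))
      _ = 2 * d * S := by simp; ring
  -- pair `H G(z, ·) = δ_z` with `G(z, ·)`
  have henergy : HasSum (fun w => (1 + V w) * G z w ^ 2)
      (G z z + (2 * d : ℝ)⁻¹ * ∑' w, G z w * N w) := by
    refine ((hasSum_ite_eq z (G z z)).add (hGN.hasSum.mul_left _)).congr_fun fun w => ?_
    have h := hG z w
    split_ifs at h ⊢ with hw
    · rw [hw] at h ⊢
      linear_combination G z z * h
    · linear_combination G z w * h
  have hS : 0 ≤ S := tsum_nonneg fun w => sq_nonneg _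
  have hcross : (2 * d : ℝ)⁻¹ * ∑' w, G z w * N w ≤ S :=
    calc (2 * d : ℝ)⁻¹ * ∑' w, G z w * N w ≤ (2 * d : ℝ)⁻¹ * (2 * d) * S := by
          rw [mul_assoc]; gcongr
      _ ≤ S := mul_le_of_le_one_left hS inv_mul_le_one
  have hlower := hasSum_le (fun w => by nlinarith [hVa w, sq_nonneg (G z w)])
    (hsq.hasSum.mul_left (1 + a)) henergy
  linarith

theorem apply_self_le_inv (hG : IsGreenFunction V G) {a : ℝ} (ha : 0 < a) (hVa : ∀ w, a ≤ V w)
    {z : Fin d → ℤ} (hsq : Summable fun w => G z w ^ 2) (hz : 0 < G z z) :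
    G z z ≤ a⁻¹ := by
  have hle : G z z ^ 2 ≤ ∑' w, G z w ^ 2 := hsq.le_tsum z fun w _ => sq_nonneg _
  have henergy := hG.mul_tsum_sq_le_apply_self hVa hsq
  rw [← one_div, le_div_iff₀ ha]
  nlinarith [mul_le_mul_of_nonneg_left hle ha.le]

end IsGreenFunction

section TwoPoint

variable {d : ℕ} {G : (Fin d → ℤ) → (Fin d → ℤ) → ℝ} {c : ℝ}

theorem apply_le_pow_add_mul_apply (hG0 : ∀ z w, 0 ≤ G z w) (hsymm : ∀ z w, G z w = G w z)
    (hc : 1 ≤ c)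
    (hstep : ∀ u w i, G u (w + Pi.single i 1) + G u (w - Pi.single i 1) ≤ c * G u w)
    {m n : ℕ} {u u' v v' : Fin d → ℤ} (hu : ∑ i, |u i - u' i| ≤ m)
    (hv : ∑ i, |v i - v' i| ≤ n) :
    G u' v' ≤ c ^ (m + n) * G u v :=
  calc G u' v' ≤ c ^ n * G u' v :=
        le_pow_mul_of_add_single_add_sub_single_le (hG0 u') hc (hstep u') hv
    _ = c ^ n * G v u' := by rw [hsymm]
    _ ≤ c ^ n * (c ^ m * G v u) := by
        gcongr
        exact le_pow_mul_of_add_single_add_sub_single_le (hG0 v) hc (hstep v) hu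
    _ = c ^ (m + n) * G u v := by rw [hsymm v u]; ring

theorem abs_log_apply_sub_log_apply_le (hpos : ∀ z w, 0 < G z w) (hsymm : ∀ z w, G z w = G w z)
    (hc : 1 ≤ c)
    (hstep : ∀ u w i, G u (w + Pi.single i 1) + G u (w - Pi.single i 1) ≤ c * G u w)
    {m n : ℕ} {u u' v v' : Fin d → ℤ} (hu : ∑ i, |u i - u' i| ≤ m)
    (hv : ∑ i, |v i - v' i| ≤ n) :
    |Real.log (G u v) - Real.log (G u' v')| ≤ (m + n) * Real.log c := by
  have hG0 : ∀ z w, 0 ≤ G z w := fun z w => (hpos z w).le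
  have hlog_le : ∀ {p q : ℝ}, 0 < p → 0 < q → p ≤ c ^ (m + n) * q →
      Real.log p ≤ (m + n) * Real.log c + Real.log q := fun hp hq hpq => by
    have := Real.log_le_log hp hpq
    rwa [Real.log_mul (by positivity) hq.ne', Real.log_pow, Nat.cast_add] at this
  rw [abs_sub_le_iff]
  constructor
  · have h := apply_le_pow_add_mul_apply hG0 hsymm hc hstep (u := u') (u' := u) (v := v')
      (v' := v) (by simpa only [abs_sub_comm] using hu) (by simpa only [abs_sub_comm] using hv)
    linarith [hlog_le (hpos u v) (hpos u' v') h]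
  · have h := apply_le_pow_add_mul_apply hG0 hsymm hc hstep hu hv
    linarith [hlog_le (hpos u' v') (hpos u v) h]

end TwoPoint

/-- Averaging trick estimate on `ℤ^d`: if `a ≤ V ≤ b` with `a > 0`,
then for any `x` with `‖x‖₁ ≥ 2`, with `m = ⌊‖x‖₁^{1/4}⌋ + 1` and `B` the ℓ¹ ball of
radius `m` about the origin, the averaged quantity
`F = -(1/#B) ∑_{z∈B} log G(z, x+z)` satisfies `|ρ(x) - F| ≤ C_{a,b} m`. -/
theorem stmt15 (d : ℕ) (hd : 0 < d) (a b : ℝ) (ha : 0 < a) (hab : a ≤ b) :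
    ∃ C : ℝ, 0 < C ∧
      ∀ (V : (Fin d → ℤ) → ℝ) (G : (Fin d → ℤ) → (Fin d → ℤ) → ℝ),
        (∀ z, a ≤ V z) → (∀ z, V z ≤ b) →
        (∀ z w, (1 + V w) * G z w
            - ((2 * d : ℝ))⁻¹ *
              ∑ i : Fin d, (G z (w + Pi.single i 1) + G z (w - Pi.single i 1))
          = if w = z then 1 else 0) →
        (∀ z, Summable fun w => (G z w) ^ 2) →
        (∀ z w, 0 < G z w) → (∀ z w, G z w = G w z) →
      ∀ x : Fin d → ℤ, 2 ≤ ∑ i, |x i| →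
      ∀ m : ℕ, m = ⌊(((∑ i, |x i| : ℤ) : ℝ)) ^ ((1 : ℝ) / 4)⌋₊ + 1 →
      ∀ B : Finset (Fin d → ℤ), (∀ z, z ∈ B ↔ (∑ i, |z i|) ≤ (m : ℤ)) →
        |Real.log (Real.sqrt (G 0 0 * G x x) / G 0 x)
            - (-(1 / (B.card : ℝ)) * ∑ z ∈ B, Real.log (G z (x + z)))|
          ≤ C * m := by
  have hb : 1 < 1 + b := by linarith
  have hc : 1 ≤ 2 * d * (1 + b) := by
    have : (1 : ℝ) ≤ d := by exact_mod_cast hd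
    nlinarith
  set K := Real.log (1 + b) + |Real.log a| with hK_def
  set L := Real.log (2 * d * (1 + b))
  have hK : 0 < K := add_pos_of_pos_of_nonneg (Real.log_pos hb) (abs_nonneg _)
  have hL : 0 ≤ L := Real.log_nonneg hc
  refine ⟨K + 2 * L, by positivity, ?_⟩
  rintro V G hVa hVb (hG : IsGreenFunction V G) hsq hpos hsymm x - m hm B hB
  have hG0 : ∀ z w, 0 ≤ G z w := fun z w => (hpos z w).le
  have hm1 : (1 : ℝ) ≤ m := by exact_mod_cast (show 1 ≤ m by omega)
  have hdiag : ∀ y,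
      -Real.log (1 + b) ≤ Real.log (G y y) ∧ Real.log (G y y) ≤ -Real.log a := by
    intro y
    rw [← Real.log_inv, ← Real.log_inv]
    exact ⟨Real.log_le_log (by positivity) (hG.inv_one_add_le_apply_self hG0 hVb y),
      Real.log_le_log (hpos y y) (hG.apply_self_le_inv ha hVa (hsq y) (hpos y y))⟩
  apply abs_sub_neg_average_le ⟨0, (hB 0).mpr (by simp)⟩
  intro z hz
  have hoff : |Real.log (G z (x + z)) - Real.log (G 0 x)| ≤ (m + m) * L :=
    abs_log_apply_sub_log_apply_le hpos hsymm hc (hG.add_single_add_sub_single_le hG0 hVb)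
      (u := z) (u' := 0) (v := x + z) (v' := x) (by simpa using (hB z).mp hz)
      (by simpa using (hB z).mp hz)
  rw [Real.log_sqrt_mul_div (hpos 0 0) (hpos x x) (hpos 0 x)]
  obtain ⟨h0l, h0u⟩ := hdiag 0
  obtain ⟨hxl, hxu⟩ := hdiag x
  have hKm : K ≤ K * m := le_mul_of_one_le_right hK.le hm1
  rw [abs_le] at hoff ⊢
  constructor <;> linarith [abs_nonneg (Real.log a), Real.log_pos hb, neg_le_abs (Real.log a)]
end
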